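/- arXiv:math-ph/0311029 — 12 statements merged into one kernel-verified Lean document; each statement's English description precedes it below -/
import Mathlib

section
/- Let I ⊆ ℝ be an open interval, V : ℝ → ℝ a function, and ε_k, ε_l real constants with ε_k < ε_l. Suppose w_k, w_l : ℝ → ℝ are differentiable on I, satisfy the Riccati equations w_k'(x) + w_k(x)^2 = V(x) - ε_k and w_l'(x) + w_l(x)^2 = V(x) - ε_l for all x ∈ I, and w_k(x) ≠ w_l(x) for all x ∈ I. Then the function w_{kl}(x) = -w_k(x) - (ε_k - ε_l)/(w_k(x) - w_l(x)) is differentiable on I and satisfies w_{kl}'(x) + w_{kl}(x)^2 = V(x) - 2·w_k'(x) - ε_l for all x ∈ I. -/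
/-!
By the quotient rule, `w_kl' = -w_k' + (ε_k - ε_l)(w_k' - w_l')/(w_k - w_l)²`. The two Riccati
equations give `w_k' - w_l' = (ε_l - ε_k) - (w_k - w_l)(w_k + w_l)`, after which
`w_kl' + w_kl² = V - 2 w_k' - ε_l` is a rational identity in `w_k`, `w_l`, `V`, `ε_k`, `ε_l`.
-/

theorem riccati_backlund_identity {𝕜 : Type*} [Field 𝕜] {a b a' b' V εk εl : 𝕜} (hab : a - b ≠ 0)
    (ha : a' + a ^ 2 = V - εk) (hb : b' + b ^ 2 = V - εl) :
    -a' - -((εk - εl) * (a' - b')) / (a - b) ^ 2 =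
      (V - 2 * a' - εl) - (-a - (εk - εl) / (a - b)) ^ 2 := by
  rw [show a' = V - εk - a ^ 2 by linear_combination ha,
    show b' = V - εl - b ^ 2 by linear_combination hb]
  field_simp
  ring

theorem HasDerivAt.riccati_backlund {𝕜 : Type*} [NontriviallyNormedField 𝕜]
    {wk wl : 𝕜 → 𝕜} {wk' wl' V εk εl x : 𝕜}
    (hk : HasDerivAt wk wk' x) (hl : HasDerivAt wl wl' x)
    (hRk : wk' + wk x ^ 2 = V - εk) (hRl : wl' + wl x ^ 2 = V - εl) (hne : wk x ≠ wl x) :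
    HasDerivAt (fun y => -wk y - (εk - εl) / (wk y - wl y))
      ((V - 2 * wk' - εl) - (-wk x - (εk - εl) / (wk x - wl x)) ^ 2) x := by
  have hd : wk x - wl x ≠ 0 := sub_ne_zero.2 hne
  have hquot := hk.neg.sub ((hasDerivAt_const x (εk - εl)).div (hk.sub hl) hd)
  rw [zero_mul, zero_sub, Pi.sub_apply, riccati_backlund_identity hd hRk hRl] at hquot
  exact hquot

theorem finite_difference_backlund_general
    (I : Set ℝ)
    (V : ℝ → ℝ) (εk εl : ℝ)
    (wk wl wk' wl' : ℝ → ℝ)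
    (hwk : ∀ x ∈ I, HasDerivAt wk (wk' x) x)
    (hwl : ∀ x ∈ I, HasDerivAt wl (wl' x) x)
    (hRk : ∀ x ∈ I, wk' x + (wk x) ^ 2 = V x - εk)
    (hRl : ∀ x ∈ I, wl' x + (wl x) ^ 2 = V x - εl)
    (hne : ∀ x ∈ I, wk x ≠ wl x) :
    ∀ x ∈ I,
      HasDerivAt (fun y => -wk y - (εk - εl) / (wk y - wl y))
        ((V x - 2 * wk' x - εl)
          - (-wk x - (εk - εl) / (wk x - wl x)) ^ 2) x :=
  fun x hx => (hwk x hx).riccati_backlund (hwl x hx) (hRk x hx) (hRl x hx) (hne x hx)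

/-- **Finite difference Bäcklund algorithm.**
If `w_k`, `w_l` solve the Riccati equations `w' + w² = V - ε_k` and
`w' + w² = V - ε_l` on an open interval `I`, with `ε_k < ε_l` and
`w_k ≠ w_l` pointwise on `I`, then
`w_kl = -w_k - (ε_k - ε_l)/(w_k - w_l)` is differentiable on `I` and solves
`w' + w² = V - 2 w_k' - ε_l` on `I`. -/
theorem finite_difference_backlund
    (I : Set ℝ) (hI : IsOpen I) (hIint : I.OrdConnected)
    (V : ℝ → ℝ) (εk εl : ℝ) (hε : εk < εl)
    (wk wl wk' wl' : ℝ → ℝ)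
    (hwk : ∀ x ∈ I, HasDerivAt wk (wk' x) x)
    (hwl : ∀ x ∈ I, HasDerivAt wl (wl' x) x)
    (hRk : ∀ x ∈ I, wk' x + (wk x) ^ 2 = V x - εk)
    (hRl : ∀ x ∈ I, wl' x + (wl x) ^ 2 = V x - εl)
    (hne : ∀ x ∈ I, wk x ≠ wl x) :
    ∀ x ∈ I,
      HasDerivAt (fun y => -wk y - (εk - εl) / (wk y - wl y))
        ((V x - 2 * wk' x - εl)
          - (-wk x - (εk - εl) / (wk x - wl x)) ^ 2) x :=
  finite_difference_backlund_general I V εk εl wk wl wk' wl' hwk hwl hRk hRl hne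
end

section
/- Let I ⊆ ℝ be an open interval, V : ℝ → ℝ a function, and ε a real constant. Let w : ℝ → ℝ be differentiable on I with w'(x) + w(x)^2 = V(x) - ε on I. Let γ : ℝ → ℝ be twice differentiable on I with γ(x) ≠ 0 for all x ∈ I, and let v : ℝ → ℝ be differentiable on I with v'(x) + v(x)^2 = V(x) + 1/γ(x)^2 - ε on I, such that w(x) - v(x) ≠ 0 for all x ∈ I. Then the function w̄(x) = -v(x) - (1/γ(x)^2)/(w(x) - v(x)) + γ'(x)/γ(x) is differentiable on I and satisfies w̄'(x) + w̄(x)^2 = V(x) - 2·((γ'(x)/γ(x))·v(x) + v'(x)) + γ''(x)/γ(x) - ε for all x ∈ I. -/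
/-!
Write `h = γ'/γ`, `g = 1/γ²` and `u = w - v`. The log-derivative satisfies its own Riccati
equation `h' + h² = γ''/γ`, while `g' = -2hg`, and subtracting the two Riccati equations gives
`u' = -u(w + v) - g`. Expanding `w̄' + w̄²` for `w̄ = -v - g/u + h`, the terms in `(g/u)²` and
`h·g/u` cancel and the remaining `g/u` terms collapse to `-g`; what is left is
`v² - v' - g - 2hv + γ''/γ`, and `v² - g = V - ε - v'` by the Riccati equation for `v`.
-/

section

variable {𝕜 : Type*} [NontriviallyNormedField 𝕜]

theorem hasDerivAt_logDeriv_of_hasDerivAt {f f' : 𝕜 → 𝕜} {f'' x : 𝕜}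
    (hf : HasDerivAt f (f' x) x) (hf' : HasDerivAt f' f'' x) (hx : f x ≠ 0) :
    HasDerivAt (fun y => f' y / f y) (f'' / f x - (f' x / f x) ^ 2) x :=
  (hf'.div hf hx).congr_deriv (by field_simp)

theorem hasDerivAt_one_div_sq {f : 𝕜 → 𝕜} {c x : 𝕜} (hf : HasDerivAt f c x) (hx : f x ≠ 0) :
    HasDerivAt (fun y => 1 / f y ^ 2) (-2 * (c / f x) * (1 / f x ^ 2)) x :=
  ((hasDerivAt_const x (1 : 𝕜)).div (hf.fun_pow 2) (pow_ne_zero 2 hx)).congr_deriv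
    (by field_simp; ring)

theorem hasDerivAt_sub_of_riccati {w v : 𝕜 → 𝕜} {a b g x : 𝕜}
    (hw : HasDerivAt w a x) (hv : HasDerivAt v b x) (hR : a + w x ^ 2 + g = b + v x ^ 2) :
    HasDerivAt (fun y => w y - v y) (-(w x - v x) * (w x + v x) - g) x :=
  (hw.sub hv).congr_deriv (by linear_combination hR)

end

theorem generalized_finite_difference_general
    (I : Set ℝ)
    (V : ℝ → ℝ) (ε : ℝ)
    (w w' v v' γ γ' γ'' : ℝ → ℝ)
    (hw : ∀ x ∈ I, HasDerivAt w (w' x) x)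
    (hv : ∀ x ∈ I, HasDerivAt v (v' x) x)
    (hγ : ∀ x ∈ I, HasDerivAt γ (γ' x) x)
    (hγ' : ∀ x ∈ I, HasDerivAt γ' (γ'' x) x)
    (hγ0 : ∀ x ∈ I, γ x ≠ 0)
    (hRw : ∀ x ∈ I, w' x + (w x) ^ 2 = V x - ε)
    (hRv : ∀ x ∈ I, v' x + (v x) ^ 2 = V x + 1 / (γ x) ^ 2 - ε)
    (hne : ∀ x ∈ I, w x - v x ≠ 0) :
    ∀ x ∈ I,
      HasDerivAt
        (fun y => -v y - (1 / (γ y) ^ 2) / (w y - v y) + γ' y / γ y)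
        ((V x - 2 * ((γ' x / γ x) * v x + v' x) + γ'' x / γ x - ε)
          - (-v x - (1 / (γ x) ^ 2) / (w x - v x) + γ' x / γ x) ^ 2) x := by
  intro x hx
  have hγx := hγ0 x hx
  have hux := hne x hx
  have hlog := hasDerivAt_logDeriv_of_hasDerivAt (hγ x hx) (hγ' x hx) hγx
  have hg := hasDerivAt_one_div_sq (hγ x hx) hγx
  have hu := hasDerivAt_sub_of_riccati (g := 1 / γ x ^ 2) (hw x hx) (hv x hx)
    (by linear_combination hRw x hx - hRv x hx)
  refine (((hv x hx).neg.sub (hg.div hu hux)).add hlog).congr_deriv ?_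
  rw [show v' x = V x + 1 / γ x ^ 2 - ε - v x ^ 2 by linear_combination hRv x hx]
  field_simp
  ring

/-- **Generalized finite difference transformation (Theorem 2 of the paper).**
If `w` solves `w' + w² = V - ε` on an open interval `I`, `γ` is twice
differentiable and never vanishing on `I`, and `v` solves
`v' + v² = V + 1/γ² - ε` on `I` with `w - v` never vanishing, then
`w̄ = -v - (1/γ²)/(w - v) + γ'/γ` is differentiable on `I` and solves
`w̄' + w̄² = V - 2((γ'/γ)v + v') + γ''/γ - ε` on `I`. -/
theorem generalized_finite_difference
    (I : Set ℝ) (hI : IsOpen I) (hIint : I.OrdConnected)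
    (V : ℝ → ℝ) (ε : ℝ)
    (w w' v v' γ γ' γ'' : ℝ → ℝ)
    (hw : ∀ x ∈ I, HasDerivAt w (w' x) x)
    (hv : ∀ x ∈ I, HasDerivAt v (v' x) x)
    (hγ : ∀ x ∈ I, HasDerivAt γ (γ' x) x)
    (hγ' : ∀ x ∈ I, HasDerivAt γ' (γ'' x) x)
    (hγ0 : ∀ x ∈ I, γ x ≠ 0)
    (hRw : ∀ x ∈ I, w' x + (w x) ^ 2 = V x - ε)
    (hRv : ∀ x ∈ I, v' x + (v x) ^ 2 = V x + 1 / (γ x) ^ 2 - ε)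
    (hne : ∀ x ∈ I, w x - v x ≠ 0) :
    ∀ x ∈ I,
      HasDerivAt
        (fun y => -v y - (1 / (γ y) ^ 2) / (w y - v y) + γ' y / γ y)
        ((V x - 2 * ((γ' x / γ x) * v x + v' x) + γ'' x / γ x - ε)
          - (-v x - (1 / (γ x) ^ 2) / (w x - v x) + γ' x / γ x) ^ 2) x :=
  generalized_finite_difference_general I V ε w w' v v' γ γ' γ'' hw hv hγ hγ' hγ0 hRw hRv hne
end

section
/- Let I ⊆ ℝ be an open interval, V : ℝ → ℝ, ε ∈ ℝ, and γ : ℝ → ℝ differentiable and never vanishing on I. Let φ_w, φ_v : ℝ → ℝ be differentiable and never vanishing on I, and set w = φ_w'/φ_w and v = φ_v'/φ_v. Assume w is differentiable with w' + w^2 = V - ε on I, v is differentiable with v' + v^2 = V + 1/γ^2 - ε on I, and w(x) ≠ v(x) on I. Define φ̄(x) = γ(x)·(-φ_w'(x) + v(x)·φ_w(x)) and w̄(x) = -v(x) - (1/γ(x)^2)/(w(x) - v(x)) + γ'(x)/γ(x). Then φ̄ is never vanishing and differentiable on I, and φ̄'(x)/φ̄(x) = w̄(x) for all x ∈ I. 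-/
/-- **Proposition relating eigenfunction transformation to the generalized
finite-difference transformation.** If `φ_w`, `φ_v` are nonvanishing
differentiable functions whose logarithmic derivatives `w = φ_w'/φ_w`,
`v = φ_v'/φ_v` solve the Riccati equations `w' + w² = V - ε` and
`v' + v² = V + 1/γ² - ε` on the open interval `I`, with `w ≠ v` on `I`,
then `φ̄ = γ(-φ_w' + v φ_w)` is nonvanishing and differentiable on `I`, and
`φ̄'/φ̄ = w̄` where `w̄ = -v - (1/γ²)/(w - v) + γ'/γ`. -/
theorem log_derivative_of_transformed_eigenfunction
    (I : Set ℝ) (hI : IsOpen I) (hIint : I.OrdConnected)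
    (V : ℝ → ℝ) (ε : ℝ)
    (γ γ' : ℝ → ℝ)
    (hγ : ∀ x ∈ I, HasDerivAt γ (γ' x) x) (hγ0 : ∀ x ∈ I, γ x ≠ 0)
    (φw φw' φv φv' : ℝ → ℝ)
    (hφw : ∀ x ∈ I, HasDerivAt φw (φw' x) x) (hφw0 : ∀ x ∈ I, φw x ≠ 0)
    (hφv : ∀ x ∈ I, HasDerivAt φv (φv' x) x) (hφv0 : ∀ x ∈ I, φv x ≠ 0)
    (w v w' v' : ℝ → ℝ)
    (hwdef : ∀ x ∈ I, w x = φw' x / φw x)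
    (hvdef : ∀ x ∈ I, v x = φv' x / φv x)
    (hw : ∀ x ∈ I, HasDerivAt w (w' x) x)
    (hv : ∀ x ∈ I, HasDerivAt v (v' x) x)
    (hRw : ∀ x ∈ I, w' x + (w x) ^ 2 = V x - ε)
    (hRv : ∀ x ∈ I, v' x + (v x) ^ 2 = V x + 1 / (γ x) ^ 2 - ε)
    (hne : ∀ x ∈ I, w x ≠ v x) :
    (∀ x ∈ I, γ x * (-φw' x + v x * φw x) ≠ 0) ∧
    (∀ x ∈ I, DifferentiableAt ℝ (fun y => γ y * (-φw' y + v y * φw y)) x) ∧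
    (∀ x ∈ I,
      deriv (fun y => γ y * (-φw' y + v y * φw y)) x
          / (γ x * (-φw' x + v x * φw x))
        = -v x - (1 / (γ x) ^ 2) / (w x - v x) + γ' x / γ x) := by

  have hφw'eq : ∀ x ∈ I, φw' x = w x * φw x := by
    intro x hx
    rw [hwdef x hx, div_mul_cancel₀ _ (hφw0 x hx)]
  have hkey : ∀ x ∈ I, -φw' x + v x * φw x = φw x * (v x - w x) := by
    intro x hx
    rw [hφw'eq x hx]; ring
  have hne0 : ∀ x ∈ I, γ x * (-φw' x + v x * φw x) ≠ 0 := by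
    intro x hx
    rw [hkey x hx]
    exact mul_ne_zero (hγ0 x hx)
      (mul_ne_zero (hφw0 x hx) (sub_ne_zero.2 fun h => hne x hx h.symm))
  have hder : ∀ x ∈ I, HasDerivAt (fun y => γ y * (-φw' y + v y * φw y))
      (γ' x * (φw x * (v x - w x)) +
        γ x * (φw' x * (v x - w x) + φw x * (v' x - w' x))) x := by
    intro x hx
    have hg : HasDerivAt (fun y => γ y * (φw y * (v y - w y)))
        (γ' x * (φw x * (v x - w x)) +
          γ x * (φw' x * (v x - w x) + φw x * (v' x - w' x))) x :=
      (hγ x hx).mul ((hφw x hx).mul ((hv x hx).sub (hw x hx)))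
    refine hg.congr_of_eventuallyEq ?_
    filter_upwards [hI.mem_nhds hx] with y hy
    rw [hkey y hy]
  refine ⟨hne0, fun x hx => (hder x hx).differentiableAt, fun x hx => ?_⟩
  rw [(hder x hx).deriv, hkey x hx, hφw'eq x hx]
  have hv' : v' x = V x + 1 / (γ x) ^ 2 - ε - (v x) ^ 2 := by
    have := hRv x hx; linarith
  have hw' : w' x = V x - ε - (w x) ^ 2 := by
    have := hRw x hx; linarith
  rw [hv', hw']
  have h1 := hγ0 x hx
  have h2 := hφw0 x hx
  have h3 : v x - w x ≠ 0 := sub_ne_zero.2 fun h => hne x hx h.symm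
  have h4 : w x - v x ≠ 0 := sub_ne_zero.2 (hne x hx)
  field_simp
  ring
end

section
/- Let I ⊆ ℝ be an open interval, V : ℝ → ℝ continuous on I, ε ∈ ℝ, and γ : ℝ → ℝ twice differentiable and never vanishing on I. Let φ_w : ℝ → ℝ be twice differentiable on I with -φ_w''(x) + (V(x) - ε)·φ_w(x) = 0 on I, and let φ_v : ℝ → ℝ be twice differentiable and never vanishing on I with -φ_v''(x) + (V(x) + 1/γ(x)^2 - ε)·φ_v(x) = 0 on I. Set v = φ_v'/φ_v and define φ̄(x) = γ(x)·(-φ_w'(x) + v(x)·φ_w(x)). Then φ̄ is twice differentiable on I and satisfies -φ̄''(x) + (V(x) - 2·((γ'(x)/γ(x))·v(x) + v'(x)) + γ''(x)/γ(x) - ε)·φ̄(x) = 0 for all x ∈ I. -/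
/-!
With `v = φ_v'/φ_v`, the equation for `φ_v` becomes the Riccati equation
`v' = V + 1/γ² - ε - v²`, and then `w = -φ_w' + v φ_w` solves the first-order equation
`w' = φ_w/γ² - v w`. Hence `φ̄ = γ w` has `φ̄' = (γ' - γ v) w + φ_w/γ`, and differentiating once
more, eliminating `φ_w'` through `w` and `V - ε` through the Riccati equation, gives the claim.
-/

theorem hasDerivAt_div_of_second_order {φ φ' φ'' : ℝ → ℝ} {q x : ℝ}
    (hφ : HasDerivAt φ (φ' x) x) (hφ' : HasDerivAt φ' (φ'' x) x) (h0 : φ x ≠ 0)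
    (hS : φ'' x = q * φ x) :
    HasDerivAt (fun y => φ' y / φ y) (q - (φ' x / φ x) ^ 2) x := by
  refine (hφ'.div hφ h0).congr_deriv ?_
  rw [hS]
  field_simp

theorem hasDerivAt_neg_add_mul_of_riccati {φ φ' φ'' v : ℝ → ℝ} {p r v' x : ℝ}
    (hφ : HasDerivAt φ (φ' x) x) (hφ' : HasDerivAt φ' (φ'' x) x) (hv : HasDerivAt v v' x)
    (hS : φ'' x = p * φ x) (hR : v' = p + r - v x ^ 2) :
    HasDerivAt (fun y => -φ' y + v y * φ y) (r * φ x - v x * (-φ' x + v x * φ x)) x := by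
  refine (hφ'.neg.add (hv.mul hφ)).congr_deriv ?_
  rw [hS, hR]
  ring

theorem hasDerivAt_deriv_of_hasDerivAt_on {f f' f'' : ℝ → ℝ} {s : Set ℝ} (hs : IsOpen s)
    (hf : ∀ x ∈ s, HasDerivAt f (f' x) x) (hf' : ∀ x ∈ s, HasDerivAt f' (f'' x) x)
    {x : ℝ} (hx : x ∈ s) :
    HasDerivAt (deriv f) (f'' x) x :=
  (hf' x hx).congr_of_eventuallyEq <|
    Filter.eventuallyEq_of_mem (hs.mem_nhds hx) fun y hy => (hf y hy).deriv

theorem schrodinger_generalized_finite_difference_general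
    (I : Set ℝ) (hI : IsOpen I)
    (V : ℝ → ℝ) (ε : ℝ)
    (γ γ' γ'' : ℝ → ℝ)
    (hγ : ∀ x ∈ I, HasDerivAt γ (γ' x) x)
    (hγ' : ∀ x ∈ I, HasDerivAt γ' (γ'' x) x)
    (hγ0 : ∀ x ∈ I, γ x ≠ 0)
    (φw φw' φw'' : ℝ → ℝ)
    (hφw : ∀ x ∈ I, HasDerivAt φw (φw' x) x)
    (hφw' : ∀ x ∈ I, HasDerivAt φw' (φw'' x) x)
    (hSw : ∀ x ∈ I, -φw'' x + (V x - ε) * φw x = 0)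
    (φv φv' φv'' : ℝ → ℝ)
    (hφv : ∀ x ∈ I, HasDerivAt φv (φv' x) x)
    (hφv' : ∀ x ∈ I, HasDerivAt φv' (φv'' x) x)
    (hφv0 : ∀ x ∈ I, φv x ≠ 0)
    (hSv : ∀ x ∈ I, -φv'' x + (V x + 1 / (γ x) ^ 2 - ε) * φv x = 0) :
    (∀ x ∈ I,
      DifferentiableAt ℝ (fun y => γ y * (-φw' y + (φv' y / φv y) * φw y)) x) ∧
    (∀ x ∈ I,
      DifferentiableAt ℝ
        (deriv (fun y => γ y * (-φw' y + (φv' y / φv y) * φw y))) x) ∧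
    (∀ x ∈ I,
      -(deriv (deriv (fun y => γ y * (-φw' y + (φv' y / φv y) * φw y))) x)
        + (V x
            - 2 * ((γ' x / γ x) * (φv' x / φv x)
                    + deriv (fun y => φv' y / φv y) x)
            + γ'' x / γ x - ε)
          * (γ x * (-φw' x + (φv' x / φv x) * φw x)) = 0) := by
  set v := fun y => φv' y / φv y with hv_def
  set w := fun y => -φw' y + v y * φw y with hw_def
  have hv (x) (hx : x ∈ I) : HasDerivAt v (V x + 1 / γ x ^ 2 - ε - v x ^ 2) x :=
    hasDerivAt_div_of_second_order (hφv x hx) (hφv' x hx) (hφv0 x hx) (by linarith [hSv x hx])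
  have hw (x) (hx : x ∈ I) : HasDerivAt w (1 / γ x ^ 2 * φw x - v x * w x) x :=
    hasDerivAt_neg_add_mul_of_riccati (hφw x hx) (hφw' x hx) (hv x hx)
      (p := V x - ε) (by linarith [hSw x hx]) (by ring)
  have hφb (x) (hx : x ∈ I) :
      HasDerivAt (fun y => γ y * w y) ((γ' x - γ x * v x) * w x + φw x / γ x) x := by
    refine ((hγ x hx).mul (hw x hx)).congr_deriv ?_
    field_simp [hγ0 x hx]
    ring
  have hφb' := fun x (hx : x ∈ I) =>
    (((hγ' x hx).sub ((hγ x hx).mul (hv x hx))).mul (hw x hx)).add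
      ((hφw x hx).div (hγ x hx) (hγ0 x hx))
  have hφb'' := fun x (hx : x ∈ I) => hasDerivAt_deriv_of_hasDerivAt_on hI hφb hφb' hx
  refine ⟨fun x hx => (hφb x hx).differentiableAt, fun x hx => (hφb'' x hx).differentiableAt,
    fun x hx => ?_⟩
  rw [(hφb'' x hx).deriv, (hv x hx).deriv]
  simp only [hw_def, hv_def, Pi.sub_apply, Pi.mul_apply]
  field_simp [hγ0 x hx, hφv0 x hx]
  ring

/-- **Theorem 3 of the paper (second-order counterpart of the generalized
finite-difference transformation).** If `φ_w` solves the Schrödinger-type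
equation `-φ'' + (V - ε)φ = 0` on the open interval `I`, `γ` is twice
differentiable and never vanishing on `I`, and `φ_v` is a never vanishing
solution of `-φ'' + (V + 1/γ² - ε)φ = 0` on `I`, then with `v = φ_v'/φ_v`,
the function `φ̄ = γ(-φ_w' + v φ_w)` is twice differentiable on `I` and
satisfies `-φ̄'' + (V - 2((γ'/γ)v + v') + γ''/γ - ε)φ̄ = 0` on `I`. -/
theorem schrodinger_generalized_finite_difference
    (I : Set ℝ) (hI : IsOpen I) (hIint : I.OrdConnected)
    (V : ℝ → ℝ) (hV : ContinuousOn V I) (ε : ℝ)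
    (γ γ' γ'' : ℝ → ℝ)
    (hγ : ∀ x ∈ I, HasDerivAt γ (γ' x) x)
    (hγ' : ∀ x ∈ I, HasDerivAt γ' (γ'' x) x)
    (hγ0 : ∀ x ∈ I, γ x ≠ 0)
    (φw φw' φw'' : ℝ → ℝ)
    (hφw : ∀ x ∈ I, HasDerivAt φw (φw' x) x)
    (hφw' : ∀ x ∈ I, HasDerivAt φw' (φw'' x) x)
    (hSw : ∀ x ∈ I, -φw'' x + (V x - ε) * φw x = 0)
    (φv φv' φv'' : ℝ → ℝ)
    (hφv : ∀ x ∈ I, HasDerivAt φv (φv' x) x)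
    (hφv' : ∀ x ∈ I, HasDerivAt φv' (φv'' x) x)
    (hφv0 : ∀ x ∈ I, φv x ≠ 0)
    (hSv : ∀ x ∈ I, -φv'' x + (V x + 1 / (γ x) ^ 2 - ε) * φv x = 0) :
    (∀ x ∈ I,
      DifferentiableAt ℝ (fun y => γ y * (-φw' y + (φv' y / φv y) * φw y)) x) ∧
    (∀ x ∈ I,
      DifferentiableAt ℝ
        (deriv (fun y => γ y * (-φw' y + (φv' y / φv y) * φw y))) x) ∧
    (∀ x ∈ I,
      -(deriv (deriv (fun y => γ y * (-φw' y + (φv' y / φv y) * φw y))) x)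
        + (V x
            - 2 * ((γ' x / γ x) * (φv' x / φv x)
                    + deriv (fun y => φv' y / φv y) x)
            + γ'' x / γ x - ε)
          * (γ x * (-φw' x + (φv' x / φv x) * φw x)) = 0) :=
  schrodinger_generalized_finite_difference_general I hI V ε γ γ' γ'' hγ hγ' hγ0 φw φw' φw'' hφw
    hφw' hSw φv φv' φv'' hφv hφv' hφv0 hSv
end

section
/- Let I ⊆ ℝ be a connected open interval, W : ℝ → ℝ twice continuously differentiable on I, and V, Ṽ : ℝ → ℝ continuous on I. Suppose that for every smooth function ψ : ℝ → ℝ and every x ∈ I, d/dx(-ψ'' + V·ψ)(x) + W(x)·(-ψ''(x) + V(x)·ψ(x)) = -(ψ' + W·ψ)''(x) + Ṽ(x)·(ψ'(x) + W(x)·ψ(x)). Then Ṽ(x) = V(x) + 2·W'(x) on I, and there exists a constant ε ∈ ℝ such that V(x) = W(x)^2 - W'(x) + ε and Ṽ(x) = W(x)^2 + W'(x) + ε for all x ∈ I. -/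
open Filter Topology

lemma aux_hasDerivAt_mul {V g : ℝ → ℝ} {a c : ℝ}
    (hV : ContinuousAt V a) (hg0 : g a = 0) (hg : HasDerivAt g c a) :
    HasDerivAt (fun y => V y * g y) (V a * c) a := by
  rw [hasDerivAt_iff_tendsto_slope] at hg ⊢
  have hev : (fun x => V x * slope g a x) =ᶠ[𝓝[≠] a] slope (fun y => V y * g y) a := by
    filter_upwards [self_mem_nhdsWithin] with x hx
    simp only [slope_def_field, hg0, mul_zero, sub_zero]
    ring
  exact ((hV.continuousWithinAt.tendsto).mul hg).congr' hev



/-- **The intertwining relation forces the Riccati form of the potentials.**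
Let `I` be a connected open interval, `W` twice continuously differentiable
and `V`, `Vt` continuous on `I`. If for every smooth `ψ` and every `x ∈ I`
`d/dx(-ψ'' + Vψ)(x) + W(x)(-ψ''(x) + V(x)ψ(x))
  = -(ψ' + Wψ)''(x) + Vt(x)(ψ'(x) + W(x)ψ(x))`,
then `Vt = V + 2W'` on `I` and there is a constant `ε` with
`V = W² - W' + ε` and `Vt = W² + W' + ε` on `I`. -/
theorem intertwined_potentials_riccati_pair
    (I : Set ℝ) (hI : IsOpen I) (hIconn : IsConnected I) (hIint : I.OrdConnected)
    (W : ℝ → ℝ) (hW : ContDiffOn ℝ 2 W I)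
    (V Vt : ℝ → ℝ) (hV : ContinuousOn V I) (hVt : ContinuousOn Vt I)
    (h : ∀ ψ : ℝ → ℝ, ContDiff ℝ (⊤ : ℕ∞) ψ → ∀ x ∈ I,
      deriv (fun y => -(deriv (deriv ψ) y) + V y * ψ y) x
          + W x * (-(deriv (deriv ψ) x) + V x * ψ x)
        = -(deriv (deriv (fun y => deriv ψ y + W y * ψ y)) x)
          + Vt x * (deriv ψ x + W x * ψ x)) :
    (∀ x ∈ I, Vt x = V x + 2 * deriv W x) ∧
    ∃ ε : ℝ, ∀ x ∈ I,
      V x = (W x) ^ 2 - deriv W x + ε ∧ Vt x = (W x) ^ 2 + deriv W x + ε := by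
  -- basic differentiability facts
  have hWd : ∀ x ∈ I, HasDerivAt W (deriv W x) x := fun x hx =>
    ((hW.differentiableOn (by norm_num)).differentiableAt (hI.mem_nhds hx)).hasDerivAt
  have hW1c : ContDiffOn ℝ 1 (deriv W) I := hW.deriv_of_isOpen hI (by norm_num)
  have hW1d : ∀ x ∈ I, HasDerivAt (deriv W) (deriv (deriv W) x) x := fun x hx =>
    ((hW1c.differentiableOn (by norm_num)).differentiableAt (hI.mem_nhds hx)).hasDerivAt
  have hVc : ∀ x ∈ I, ContinuousAt V x := fun x hx =>
    (hV.continuousAt (hI.mem_nhds hx))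
  -- Step 1 : Vt = V + 2 W' on I, via ψ y = y - a
  have step1 : ∀ a ∈ I, Vt a = V a + 2 * deriv W a := by
    intro a ha
    have hid : ∀ y : ℝ, HasDerivAt (fun z : ℝ => z - a) 1 y := fun y => by
      simpa using (hasDerivAt_id y).sub_const a
    have hψ : ContDiff ℝ (⊤ : ℕ∞) (fun y : ℝ => y - a) := contDiff_id.sub contDiff_const
    have key := h (fun y => y - a) hψ a ha
    have hd1 : deriv (fun y : ℝ => y - a) = fun _ => (1 : ℝ) := by
      funext y; exact (hid y).deriv
    simp only [hd1, deriv_const', neg_zero, zero_add, sub_self, mul_zero, add_zero,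
      mul_one] at key
    have hL : deriv (fun y => V y * (y - a)) a = V a := by
      have := aux_hasDerivAt_mul (hVc a ha) (by simp) (hid a)
      simpa using this.deriv
    have hin : ∀ x ∈ I, HasDerivAt (fun y => 1 + W y * (y - a))
        (deriv W x * (x - a) + W x) x := by
      intro x hx
      have := ((hWd x hx).mul (hid x)).const_add 1
      simpa using this
    have hev : deriv (fun y => 1 + W y * (y - a)) =ᶠ[𝓝 a]
        fun x => deriv W x * (x - a) + W x := by
      filter_upwards [hI.mem_nhds ha] with x hx using (hin x hx).deriv
    have hout : HasDerivAt (fun x => deriv W x * (x - a) + W x)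
        (2 * deriv W a) a := by
      have := ((hW1d a ha).mul (hid a)).add (hWd a ha)
      exact this.congr_deriv (by ring)
    have hR : deriv (deriv (fun y => 1 + W y * (y - a))) a = 2 * deriv W a := by
      rw [hev.deriv_eq]; exact hout.deriv
    rw [hL, hR] at key
    linarith
  -- Step 2 : V has derivative 2 W W' - W'' at each point of I
  have step2 : ∀ a ∈ I, HasDerivAt V (2 * W a * deriv W a - deriv (deriv W) a) a := by
    intro a ha
    have hid : ∀ y : ℝ, HasDerivAt (fun z : ℝ => z - a) 1 y := fun y => by
      simpa using (hasDerivAt_id y).sub_const a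
    have hs1 := step1 a ha
    -- equation from ψ = 1
    have keyA := h (fun _ => (1 : ℝ)) contDiff_const a ha
    simp only [deriv_const', neg_zero, zero_add, mul_one] at keyA
    rw [hs1] at keyA
    -- keyA : deriv V a + W a * V a = -(deriv (deriv W) a) + (V a + 2 deriv W a) * W a
    by_cases hdiff : DifferentiableAt ℝ V a
    · have hval : deriv V a = 2 * W a * deriv W a - deriv (deriv W) a := by
        linear_combination keyA
      exact hval ▸ hdiff.hasDerivAt
    · exfalso
      -- equation from ψ y = 1 + (y-a)^3/6
      have hψ : ContDiff ℝ (⊤ : ℕ∞) (fun y : ℝ => 1 + (y - a) ^ 3 / 6) :=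
        contDiff_const.add (((contDiff_id.sub contDiff_const).pow 3).div_const 6)
      have keyB := h (fun y => 1 + (y - a) ^ 3 / 6) hψ a ha
      have hd1 : deriv (fun y : ℝ => 1 + (y - a) ^ 3 / 6) = fun y => (y - a) ^ 2 / 2 := by
        funext y
        have : HasDerivAt (fun y : ℝ => 1 + (y - a) ^ 3 / 6) ((y - a) ^ 2 / 2) y := by
          have := (((hid y).pow 3).div_const 6).const_add 1
          exact this.congr_deriv (by push_cast; ring)
        exact this.deriv
      have hd1' : deriv (fun y : ℝ => (y - a) ^ 2 / 2) = fun y => y - a := by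
        funext y
        have : HasDerivAt (fun y : ℝ => (y - a) ^ 2 / 2) (y - a) y := by
          have := ((hid y).pow 2).div_const 2
          exact this.congr_deriv (by push_cast; ring)
        exact this.deriv
      simp only [hd1, hd1', sub_self, ne_eq, OfNat.ofNat_ne_zero, not_false_iff,
        zero_pow, zero_div, add_zero, zero_add, neg_zero, mul_one, mul_zero] at keyB
      -- LHS deriv is zero since the function is not differentiable at a
      have h30 : HasDerivAt (fun y : ℝ => (y - a) ^ 3 / 6) 0 a := by
        have := ((hid a).pow 3).div_const 6
        exact this.congr_deriv (by simp)
      have hcube : HasDerivAt (fun y => V y * ((y - a) ^ 3 / 6)) 0 a := by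
        simpa using aux_hasDerivAt_mul (hVc a ha) (by simp) h30
      have hnd : ¬ DifferentiableAt ℝ (fun y => -(y - a) + V y * (1 + (y - a) ^ 3 / 6)) a := by
        intro hcon
        apply hdiff
        have hfe : (fun y => V y) = fun y =>
            (-(y - a) + V y * (1 + (y - a) ^ 3 / 6)) + (y - a) - V y * ((y - a) ^ 3 / 6) := by
          funext y; ring
        rw [show V = fun y => V y from rfl, hfe]
        exact ((hcon.add ((differentiable_id.sub_const a) a)).sub hcube.differentiableAt)
      rw [deriv_zero_of_not_differentiableAt hnd] at keyB
      -- compute the second derivative on the RHS of keyB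
      have hin : ∀ x ∈ I, HasDerivAt (fun y => (y - a) ^ 2 / 2 + W y * (1 + (y - a) ^ 3 / 6))
          ((x - a) + (deriv W x * (1 + (x - a) ^ 3 / 6) + W x * ((x - a) ^ 2 / 2))) x := by
        intro x hx
        have h1 : HasDerivAt (fun y : ℝ => (y - a) ^ 2 / 2) (x - a) x := by
          have := ((hid x).pow 2).div_const 2
          exact this.congr_deriv (by push_cast; ring)
        have h2 : HasDerivAt (fun y : ℝ => 1 + (y - a) ^ 3 / 6) ((x - a) ^ 2 / 2) x := by
          have := (((hid x).pow 3).div_const 6).const_add 1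
          exact this.congr_deriv (by push_cast; ring)
        exact h1.add ((hWd x hx).mul h2)
      have hev : deriv (fun y => (y - a) ^ 2 / 2 + W y * (1 + (y - a) ^ 3 / 6)) =ᶠ[𝓝 a]
          fun x => (x - a) + (deriv W x * (1 + (x - a) ^ 3 / 6) + W x * ((x - a) ^ 2 / 2)) := by
        filter_upwards [hI.mem_nhds ha] with x hx using (hin x hx).deriv
      have hout : HasDerivAt
          (fun x => (x - a) + (deriv W x * (1 + (x - a) ^ 3 / 6) + W x * ((x - a) ^ 2 / 2)))
          (1 + deriv (deriv W) a) a := by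
        have h2 : HasDerivAt (fun x : ℝ => 1 + (x - a) ^ 3 / 6) ((a - a) ^ 2 / 2) a := by
          have := (((hid a).pow 3).div_const 6).const_add 1
          exact this.congr_deriv (by push_cast; ring)
        have h3 : HasDerivAt (fun x : ℝ => (x - a) ^ 2 / 2) (a - a) a := by
          have := ((hid a).pow 2).div_const 2
          exact this.congr_deriv (by push_cast; ring)
        have := (hid a).add (((hW1d a ha).mul h2).add ((hWd a ha).mul h3))
        exact this.congr_deriv (by ring)
      have hR : deriv (deriv (fun y => (y - a) ^ 2 / 2 + W y * (1 + (y - a) ^ 3 / 6))) a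
          = 1 + deriv (deriv W) a := by
        rw [hev.deriv_eq]; exact hout.deriv
      rw [hR, hs1] at keyB
      have hAz : deriv V a = 0 := deriv_zero_of_not_differentiableAt hdiff
      rw [hAz] at keyA
      have : (0 : ℝ) = 1 := by linear_combination keyA - keyB
      norm_num at this
  -- Step 3 : F = V - W^2 + W' is constant on I
  obtain ⟨a₀, ha₀⟩ := hIconn.nonempty
  set F : ℝ → ℝ := fun x => V x - W x ^ 2 + deriv W x with hF
  have hFd : ∀ x ∈ I, HasDerivAt F 0 x := by
    intro x hx
    have := ((step2 x hx).sub (((hWd x hx).pow 2))).add (hW1d x hx)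
    refine this.congr_deriv ?_
    push_cast; ring
  have hconst : ∀ x ∈ I, F x = F a₀ := by
    intro x hx
    rcases le_total a₀ x with hle | hle
    · have hsub : Set.Icc a₀ x ⊆ I := hIint.out ha₀ hx
      have := constant_of_has_deriv_right_zero
        (f := F) (a := a₀) (b := x)
        (fun y hy => ((hFd y (hsub hy)).differentiableAt.continuousAt).continuousWithinAt)
        (fun y hy => ((hFd y (hsub (Set.mem_Icc.2 ⟨hy.1, hy.2.le⟩))).hasDerivWithinAt))
      exact this x (Set.mem_Icc.2 ⟨hle, le_rfl⟩)
    · have hsub : Set.Icc x a₀ ⊆ I := hIint.out hx ha₀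
      have := constant_of_has_deriv_right_zero
        (f := F) (a := x) (b := a₀)
        (fun y hy => ((hFd y (hsub hy)).differentiableAt.continuousAt).continuousWithinAt)
        (fun y hy => ((hFd y (hsub (Set.mem_Icc.2 ⟨hy.1, hy.2.le⟩))).hasDerivWithinAt))
      exact (this a₀ (Set.mem_Icc.2 ⟨hle, le_rfl⟩)).symm
  refine ⟨step1, V a₀ - W a₀ ^ 2 + deriv W a₀, fun x hx => ?_⟩
  have h1 : V x - W x ^ 2 + deriv W x = V a₀ - W a₀ ^ 2 + deriv W a₀ := hconst x hx
  have h2 := step1 x hx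
  constructor <;> linarith
end

section
/- Let I ⊆ ℝ be an open interval, a₂, a₁, a₀ : ℝ → ℝ functions, and y : ℝ → ℝ differentiable on I with y'(x) = a₂(x)·y(x)^2 + a₁(x)·y(x) + a₀(x) on I. Let α, β, γ, δ : ℝ → ℝ be differentiable on I with α(x)δ(x) - β(x)γ(x) = 1 and γ(x)·y(x) + δ(x) ≠ 0 for all x ∈ I. Then ȳ = (α·y + β)/(γ·y + δ) is differentiable on I and satisfies ȳ' = ā₂·ȳ² + ā₁·ȳ + ā₀ on I, where ā₂ = δ²a₂ - δγa₁ + γ²a₀ + γδ' - δγ', ā₁ = -2βδa₂ + (αδ + βγ)a₁ - 2αγa₀ + δα' - αδ' + βγ' - γβ', and ā₀ = β²a₂ - αβa₁ + α²a₀ + αβ' - βα'. -/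
/-! By the quotient rule `ȳ' = (n' d - n d') / d²` with `n = α y + β`, `d = γ y + δ`.
Inverting the unimodular matrix gives `y = δ n - β d` and `1 = α d - γ n`; substituting these
turns both `y' = a₂ y² + a₁ y + a₀` and the terms coming from `α', β', γ', δ'` into quadratic
forms in `(n, d)`, whose coefficients are the transformed ones. -/

theorem HasDerivAt.moebius {𝕜 : Type*} [NontriviallyNormedField 𝕜] {α β γ δ y : 𝕜 → 𝕜}
    {α' β' γ' δ' y' x : 𝕜} (hα : HasDerivAt α α' x) (hβ : HasDerivAt β β' x)
    (hγ : HasDerivAt γ γ' x) (hδ : HasDerivAt δ δ' x) (hy : HasDerivAt y y' x)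
    (hd : γ x * y x + δ x ≠ 0) :
    HasDerivAt (fun t => (α t * y t + β t) / (γ t * y t + δ t))
      (((α' * y x + α x * y' + β') * (γ x * y x + δ x)
        - (α x * y x + β x) * (γ' * y x + γ x * y' + δ')) / (γ x * y x + δ x) ^ 2) x :=
  ((hα.mul hy).add hβ).div ((hγ.mul hy).add hδ) hd

theorem moebius_riccati_deriv_eq {K : Type*} [Field K] {a₂ a₁ a₀ y y' α β γ δ α' β' γ' δ' : K}
    (hy' : y' = a₂ * y ^ 2 + a₁ * y + a₀) (hdet : α * δ - β * γ = 1) (hd : γ * y + δ ≠ 0) :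
    ((α' * y + α * y' + β') * (γ * y + δ) - (α * y + β) * (γ' * y + γ * y' + δ'))
        / (γ * y + δ) ^ 2
      = (δ ^ 2 * a₂ - δ * γ * a₁ + γ ^ 2 * a₀ + γ * δ' - δ * γ') * ((α * y + β) / (γ * y + δ)) ^ 2
        + (-2 * β * δ * a₂ + (α * δ + β * γ) * a₁ - 2 * α * γ * a₀
            + δ * α' - α * δ' + β * γ' - γ * β') * ((α * y + β) / (γ * y + δ))
        + (β ^ 2 * a₂ - α * β * a₁ + α ^ 2 * a₀ + α * β' - β * α') := by
  set n := α * y + β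
  set d := γ * y + δ
  have hy : δ * n - β * d = y := by linear_combination y * hdet
  have hone : α * d - γ * n = 1 := by linear_combination hdet
  clear_value n d
  have hquot : (α' * y + α * y' + β') * d - n * (γ' * y + γ * y' + δ')
      = y' + ((α' * y + β') * d - n * (γ' * y + δ')) := by linear_combination y' * hone
  have hriccati_part : (δ ^ 2 * a₂ - δ * γ * a₁ + γ ^ 2 * a₀) * n ^ 2
      + (-2 * β * δ * a₂ + (α * δ + β * γ) * a₁ - 2 * α * γ * a₀) * n * d
      + (β ^ 2 * a₂ - α * β * a₁ + α ^ 2 * a₀) * d ^ 2 = y' := by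
    rw [hy', ← hy]
    linear_combination (a₁ * (δ * n - β * d) + a₀ * (α * d - γ * n + 1)) * hone
  have hcurve_part : (γ * δ' - δ * γ') * n ^ 2 + (δ * α' - α * δ' + β * γ' - γ * β') * n * d
      + (α * β' - β * α') * d ^ 2 = (α' * y + β') * d - n * (γ' * y + δ') := by
    rw [← hy]
    linear_combination (β' * d - δ' * n) * hone
  rw [div_eq_iff (pow_ne_zero 2 hd), hquot]
  field_simp
  linear_combination -hriccati_part - hcurve_part

theorem riccati_moebius_transformation_general
    (I : Set ℝ)
    (a₂ a₁ a₀ : ℝ → ℝ)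
    (y y' : ℝ → ℝ)
    (hy : ∀ x ∈ I, HasDerivAt y (y' x) x)
    (hR : ∀ x ∈ I, y' x = a₂ x * (y x) ^ 2 + a₁ x * y x + a₀ x)
    (α β γ δ α' β' γ' δ' : ℝ → ℝ)
    (hα : ∀ x ∈ I, HasDerivAt α (α' x) x)
    (hβ : ∀ x ∈ I, HasDerivAt β (β' x) x)
    (hγ : ∀ x ∈ I, HasDerivAt γ (γ' x) x)
    (hδ : ∀ x ∈ I, HasDerivAt δ (δ' x) x)
    (hdet : ∀ x ∈ I, α x * δ x - β x * γ x = 1)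
    (hden : ∀ x ∈ I, γ x * y x + δ x ≠ 0) :
    ∀ x ∈ I,
      HasDerivAt (fun t => (α t * y t + β t) / (γ t * y t + δ t))
        (((δ x) ^ 2 * a₂ x - δ x * γ x * a₁ x + (γ x) ^ 2 * a₀ x
            + γ x * δ' x - δ x * γ' x)
              * ((α x * y x + β x) / (γ x * y x + δ x)) ^ 2
          + (-2 * β x * δ x * a₂ x + (α x * δ x + β x * γ x) * a₁ x
              - 2 * α x * γ x * a₀ x
              + δ x * α' x - α x * δ' x + β x * γ' x - γ x * β' x)
              * ((α x * y x + β x) / (γ x * y x + δ x))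
          + ((β x) ^ 2 * a₂ x - α x * β x * a₁ x + (α x) ^ 2 * a₀ x
              + α x * β' x - β x * α' x)) x := by
  intro x hx
  exact ((hα x hx).moebius (hβ x hx) (hγ x hx) (hδ x hx) (hy x hx) (hden x hx)).congr_deriv
    (moebius_riccati_deriv_eq (hR x hx) (hdet x hx) (hden x hx))

/-- **Transformation of a Riccati equation under a pointwise Möbius action
by an SL(2,ℝ)-valued curve.** If `y` solves
`y' = a₂ y² + a₁ y + a₀` on the open interval `I`, and `α, β, γ, δ` are
differentiable on `I` with `αδ - βγ = 1` and `γ y + δ ≠ 0` on `I`, then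
`ȳ = (α y + β)/(γ y + δ)` is differentiable on `I` and solves
`ȳ' = ā₂ ȳ² + ā₁ ȳ + ā₀` with the transformed coefficients
`ā₂ = δ²a₂ - δγa₁ + γ²a₀ + γδ' - δγ'`,
`ā₁ = -2βδa₂ + (αδ + βγ)a₁ - 2αγa₀ + δα' - αδ' + βγ' - γβ'`,
`ā₀ = β²a₂ - αβa₁ + α²a₀ + αβ' - βα'`. -/
theorem riccati_moebius_transformation
    (I : Set ℝ) (hI : IsOpen I)
    (a₂ a₁ a₀ : ℝ → ℝ)
    (y y' : ℝ → ℝ)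
    (hy : ∀ x ∈ I, HasDerivAt y (y' x) x)
    (hR : ∀ x ∈ I, y' x = a₂ x * (y x) ^ 2 + a₁ x * y x + a₀ x)
    (α β γ δ α' β' γ' δ' : ℝ → ℝ)
    (hα : ∀ x ∈ I, HasDerivAt α (α' x) x)
    (hβ : ∀ x ∈ I, HasDerivAt β (β' x) x)
    (hγ : ∀ x ∈ I, HasDerivAt γ (γ' x) x)
    (hδ : ∀ x ∈ I, HasDerivAt δ (δ' x) x)
    (hdet : ∀ x ∈ I, α x * δ x - β x * γ x = 1)
    (hden : ∀ x ∈ I, γ x * y x + δ x ≠ 0) :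
    ∀ x ∈ I,
      HasDerivAt (fun t => (α t * y t + β t) / (γ t * y t + δ t))
        (((δ x) ^ 2 * a₂ x - δ x * γ x * a₁ x + (γ x) ^ 2 * a₀ x
            + γ x * δ' x - δ x * γ' x)
              * ((α x * y x + β x) / (γ x * y x + δ x)) ^ 2
          + (-2 * β x * δ x * a₂ x + (α x * δ x + β x * γ x) * a₁ x
              - 2 * α x * γ x * a₀ x
              + δ x * α' x - α x * δ' x + β x * γ' x - γ x * β' x)
              * ((α x * y x + β x) / (γ x * y x + δ x))
          + ((β x) ^ 2 * a₂ x - α x * β x * a₁ x + (α x) ^ 2 * a₀ x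
              + α x * β' x - β x * α' x)) x :=
  riccati_moebius_transformation_general I a₂ a₁ a₀ y y' hy hR α β γ δ α' β' γ' δ' hα hβ hγ hδ hdet
    hden
end

section
/- For differentiable curves A : ℝ → M₂(ℝ), A(x) = [[α(x), β(x)], [γ(x), δ(x)]], with det A(x) = 1 for all x, define θ(A)(x) ∈ ℝ³ as the column (γδ' - δγ', δα' - αδ' + βγ' - γβ', αβ' - βα')(x), and let B(A)(x) be the 3×3 matrix with rows (δ², -δγ, γ²), (-2βδ, αδ + βγ, -2αγ), (β², -αβ, α²) evaluated at x. Then for any two such curves A₁, A₂ and every x ∈ ℝ: θ(A₁·A₂)(x) = B(A₁)(x)·θ(A₂)(x) + θ(A₁)(x). -/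
open Matrix

/-- The map `B` sends a 2×2 matrix `A = [[α, β], [γ, δ]]` to the 3×3 matrix
with rows `(δ², -δγ, γ²)`, `(-2βδ, αδ + βγ, -2αγ)`, `(β², -αβ, α²)`. -/
def riccatiRep (A : Matrix (Fin 2) (Fin 2) ℝ) : Matrix (Fin 3) (Fin 3) ℝ :=
  !![(A 1 1) ^ 2, -(A 1 1) * (A 1 0), (A 1 0) ^ 2;
     -2 * (A 0 1) * (A 1 1), (A 0 0) * (A 1 1) + (A 0 1) * (A 1 0),
       -2 * (A 0 0) * (A 1 0);
     (A 0 1) ^ 2, -(A 0 0) * (A 0 1), (A 0 0) ^ 2]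

/-- For a curve `A(x) = [[α(x), β(x)], [γ(x), δ(x)]]` of 2×2 matrices, the
cocycle `θ(A)(x) = (γδ' - δγ', δα' - αδ' + βγ' - γβ', αβ' - βα')(x)`. -/
noncomputable def riccatiCocycle (A : ℝ → Matrix (Fin 2) (Fin 2) ℝ) (x : ℝ) : Fin 3 → ℝ :=
  ![A x 1 0 * deriv (fun t => A t 1 1) x - A x 1 1 * deriv (fun t => A t 1 0) x,
    A x 1 1 * deriv (fun t => A t 0 0) x - A x 0 0 * deriv (fun t => A t 1 1) x
      + A x 0 1 * deriv (fun t => A t 1 0) x - A x 1 0 * deriv (fun t => A t 0 1) x,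
    A x 0 0 * deriv (fun t => A t 0 1) x - A x 0 1 * deriv (fun t => A t 0 0) x]

/-
`θ(A)` is the logarithmic derivative `A' adj A` read in coordinates on 2×2 matrices modulo
scalars, and `B(A)` is the adjoint action `M ↦ A M adj A` in the same coordinates. The product rule
and `adj (A₁A₂) = adj A₂ adj A₁` give
`(A₁A₂)' adj (A₁A₂) = A₁' adj A₁ · det A₂ + A₁ (A₂' adj A₂) adj A₁`, which is the cocycle identity
once `det A₂ = 1`.
-/
section MatrixDeriv

variable {𝕜 : Type*} [NontriviallyNormedField 𝕜] {l m n : Type*} [Fintype m]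

noncomputable def matrixDeriv (A : 𝕜 → Matrix l m 𝕜) (x : 𝕜) : Matrix l m 𝕜 :=
  of fun i j => deriv (fun t => A t i j) x

theorem matrixDeriv_mul {A : 𝕜 → Matrix l m 𝕜} {B : 𝕜 → Matrix m n 𝕜} {x : 𝕜}
    (hA : ∀ i j, DifferentiableAt 𝕜 (fun t => A t i j) x)
    (hB : ∀ i j, DifferentiableAt 𝕜 (fun t => B t i j) x) :
    matrixDeriv (fun t => A t * B t) x = matrixDeriv A x * B x + A x * matrixDeriv B x := by
  ext i j
  simp only [matrixDeriv, of_apply, Matrix.add_apply, Matrix.mul_apply, ← Finset.sum_add_distrib]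
  rw [deriv_fun_sum fun k _ => (hA i k).fun_mul (hB k j)]
  exact Finset.sum_congr rfl fun k _ => deriv_fun_mul (hA i k) (hB k j)

end MatrixDeriv

/-- Coordinates on 2×2 matrices modulo scalar matrices. -/
def sl2Coords {R : Type*} [Ring R] (M : Matrix (Fin 2) (Fin 2) R) : Fin 3 → R :=
  ![-M 1 0, M 0 0 - M 1 1, M 0 1]

theorem sl2Coords_add {R : Type*} [Ring R] (M N : Matrix (Fin 2) (Fin 2) R) :
    sl2Coords (M + N) = sl2Coords M + sl2Coords N := by
  ext i
  fin_cases i <;> simp [sl2Coords] <;> abel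

theorem riccatiCocycle_eq_sl2Coords (A : ℝ → Matrix (Fin 2) (Fin 2) ℝ) (x : ℝ) :
    riccatiCocycle A x = sl2Coords (matrixDeriv A x * adjugate (A x)) := by
  ext i
  fin_cases i <;>
    simp [riccatiCocycle, sl2Coords, matrixDeriv, adjugate_fin_two, Matrix.mul_apply,
      Fin.sum_univ_two] <;>
    ring

theorem riccatiRep_mulVec_sl2Coords (A M : Matrix (Fin 2) (Fin 2) ℝ) :
    riccatiRep A *ᵥ sl2Coords M = sl2Coords (A * M * adjugate A) := by
  ext i
  fin_cases i <;>
    simp [riccatiRep, sl2Coords, adjugate_fin_two, mulVec, dotProduct, Fin.sum_univ_three,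
      Matrix.mul_apply, Fin.sum_univ_two] <;>
    ring

theorem riccatiCocycle_mul_general (A₁ A₂ : ℝ → Matrix (Fin 2) (Fin 2) ℝ)
    (hd₁ : ∀ (i j : Fin 2) (x : ℝ), DifferentiableAt ℝ (fun t => A₁ t i j) x)
    (hd₂ : ∀ (i j : Fin 2) (x : ℝ), DifferentiableAt ℝ (fun t => A₂ t i j) x)
    (hdet₂ : ∀ x : ℝ, (A₂ x).det = 1) :
    ∀ x : ℝ,
      riccatiCocycle (fun t => A₁ t * A₂ t) x
        = (riccatiRep (A₁ x)).mulVec (riccatiCocycle A₂ x)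
          + riccatiCocycle A₁ x := by
  intro x
  have hlog : matrixDeriv (fun t => A₁ t * A₂ t) x * adjugate (A₁ x * A₂ x)
      = A₁ x * (matrixDeriv A₂ x * adjugate (A₂ x)) * adjugate (A₁ x)
        + matrixDeriv A₁ x * adjugate (A₁ x) := by
    have hunit : A₂ x * adjugate (A₂ x) = 1 := by rw [mul_adjugate, hdet₂, one_smul]
    rw [matrixDeriv_mul (hd₁ · · x) (hd₂ · · x), adjugate_mul_distrib, add_mul, add_comm]
    congr 1
    · simp only [Matrix.mul_assoc]
    · rw [Matrix.mul_assoc, ← Matrix.mul_assoc (A₂ x), hunit, Matrix.one_mul]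
  rw [riccatiCocycle_eq_sl2Coords, riccatiCocycle_eq_sl2Coords, riccatiCocycle_eq_sl2Coords,
    riccatiRep_mulVec_sl2Coords, hlog, sl2Coords_add]

/-- **`θ` is a 1-cocycle for the representation `B`:** for differentiable
SL(2,ℝ)-valued curves `A₁`, `A₂` and every `x`,
`θ(A₁A₂)(x) = B(A₁(x))·θ(A₂)(x) + θ(A₁)(x)`. -/
theorem riccatiCocycle_mul (A₁ A₂ : ℝ → Matrix (Fin 2) (Fin 2) ℝ)
    (hd₁ : ∀ (i j : Fin 2) (x : ℝ), DifferentiableAt ℝ (fun t => A₁ t i j) x)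
    (hd₂ : ∀ (i j : Fin 2) (x : ℝ), DifferentiableAt ℝ (fun t => A₂ t i j) x)
    (hdet₁ : ∀ x : ℝ, (A₁ x).det = 1) (hdet₂ : ∀ x : ℝ, (A₂ x).det = 1) :
    ∀ x : ℝ,
      riccatiCocycle (fun t => A₁ t * A₂ t) x
        = (riccatiRep (A₁ x)).mulVec (riccatiCocycle A₂ x)
          + riccatiCocycle A₁ x :=
  riccatiCocycle_mul_general A₁ A₂ hd₁ hd₂ hdet₂
end

section
/- There is no curve μ : ℝ → ℝ³ such that for every differentiable curve A : ℝ → M₂(ℝ) with det A(x) = 1 for all x, the identity θ(A)(x) = B(A)(x)·μ(x) - μ(x) holds for all x ∈ ℝ. That is, the 1-cocycle θ is not a 1-coboundary for the representation B. -/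
open Matrix

/-- **The 1-cocycle `θ` is not a 1-coboundary for the representation `B`:**
there is no curve `μ : ℝ → ℝ³` such that `θ(A) = B(A)μ - μ` for every
differentiable SL(2,ℝ)-valued curve `A`. -/
theorem riccatiCocycle_not_coboundary :
    ¬ ∃ μ : ℝ → Fin 3 → ℝ,
      ∀ A : ℝ → Matrix (Fin 2) (Fin 2) ℝ,
        (∀ (i j : Fin 2) (x : ℝ), DifferentiableAt ℝ (fun t => A t i j) x) →
        (∀ x : ℝ, (A x).det = 1) →
        ∀ x : ℝ,
          riccatiCocycle A x = (riccatiRep (A x)).mulVec (μ x) - μ x := by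
  rintro ⟨μ, h⟩
  have h1 := h (fun t => !![1, t; 0, 1]) ?_ ?_ 1
  rotate_left
  · intro i j x; fin_cases i <;> fin_cases j <;> simp
  · intro x; simp [Matrix.det_fin_two_of]
  have h2 := h (fun t => !![1, 0; t, 1]) ?_ ?_ 1
  rotate_left
  · intro i j x; fin_cases i <;> fin_cases j <;> simp
  · intro x; simp [Matrix.det_fin_two_of]
  have e11 := congrFun h1 1
  have e12 := congrFun h1 2
  have e20 := congrFun h2 0
  have e21 := congrFun h2 1
  simp [riccatiCocycle, riccatiRep, Matrix.mulVec, dotProduct, Fin.sum_univ_three] at e11 e12 e20 e21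
  nlinarith [e11, e12, e20, e21]
end

section
/- Let I ⊆ ℝ be an open interval, V : ℝ → ℝ, ε, ε̄ ∈ ℝ, and V̄ : ℝ → ℝ. Let α, β, δ : ℝ → ℝ be differentiable and γ : ℝ → ℝ twice differentiable on I, with α(x)δ(x) - β(x)γ(x) = 1, γ(x) ≠ 0 and α(x) ≠ 0 for all x ∈ I. Suppose that for all x ∈ I: (i) -1 = -δ² + γ²(V - ε) + γδ' - δγ', (ii) 0 = 2βδ - 2αγ(V - ε) + δα' - αδ' + βγ' - γβ', and (iii) V̄ - ε̄ = -β² + α²(V - ε) + αβ' - βα'. Then on I: α = δ + γ', the function v = -δ/γ satisfies the Riccati equation v' + v² = V + 1/γ² - ε, and V̄ - ε̄ = V - 2·((γ'/γ)·v + v') + γ''/γ - ε. -/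
/-!
Differentiating the determinant condition `αδ - βγ = 1` gives a fourth pointwise identity,
and a linear combination of it with (i), (ii) and the determinant itself yields `α = δ + γ'`.
Condition (i), divided by `γ²`, is exactly the Riccati equation for `v = -δ/γ`. Finally,
differentiating `α = δ + γ'` gives `α' = δ' + γ''`, and substituting `α`, `α'` and `v'`
into (iii) produces the formula for `V̄ - ε̄`.
-/

theorem HasDerivAt.unique_of_eqOn {𝕜 F : Type*} [NontriviallyNormedField 𝕜]
    [NormedAddCommGroup F] [NormedSpace 𝕜 F] {f g : 𝕜 → F} {f' g' : F} {s : Set 𝕜} {x : 𝕜}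
    (hf : HasDerivAt f f' x) (hg : HasDerivAt g g' x) (hs : IsOpen s) (hfg : Set.EqOn f g s)
    (hx : x ∈ s) : f' = g' :=
  ((hfg.eventuallyEq_of_mem (hs.mem_nhds hx)).hasDerivAt_iff.mp hf).unique hg

section Pointwise

variable {a b c d a' b' c' d' V ε : ℝ}

theorem diag_eq_of_preserving (hdet : a * d - b * c = 1)
    (hdet' : a' * d + a * d' - (b' * c + b * c') = 0)
    (h1 : -1 = -d ^ 2 + c ^ 2 * (V - ε) + c * d' - d * c')
    (h2 : 0 = 2 * b * d - 2 * a * c * (V - ε) + d * a' - a * d' + b * c' - c * b') :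
    a = d + c' := by
  linear_combination (-a) * h1 + (-c / 2) * h2 + (-c / 2) * hdet' + (c' + d) * hdet

theorem potential_eq_of_preserving {c'' : ℝ} (hc : c ≠ 0) (hdet : a * d - b * c = 1)
    (hdet' : a' * d + a * d' - (b' * c + b * c') = 0)
    (h1 : -1 = -d ^ 2 + c ^ 2 * (V - ε) + c * d' - d * c')
    (h2 : 0 = 2 * b * d - 2 * a * c * (V - ε) + d * a' - a * d' + b * c' - c * b')
    (ha : a = d + c') (ha' : a' = d' + c'') :
    -b ^ 2 + a ^ 2 * (V - ε) + a * b' - b * a'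
      = V - 2 * ((c' / c) * (-d / c) + ((V + 1 / c ^ 2 - ε) - (-d / c) ^ 2))
        + c'' / c - ε := by
  field_simp
  linear_combination (c * b + c * a' - 1) * hdet + (c * a / 2) * h2
    + (-c * a / 2) * hdet' + d * ha + c * ha' - h1

end Pointwise

theorem hasDerivAt_neg_div_of_riccati {δ γ : ℝ → ℝ} {δ' γ' x V ε : ℝ}
    (hδ : HasDerivAt δ δ' x) (hγ : HasDerivAt γ γ' x) (hγ0 : γ x ≠ 0)
    (h1 : -1 = -(δ x) ^ 2 + (γ x) ^ 2 * (V - ε) + γ x * δ' - δ x * γ') :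
    HasDerivAt (fun y => -δ y / γ y) ((V + 1 / (γ x) ^ 2 - ε) - (-δ x / γ x) ^ 2) x := by
  refine (hδ.neg.div hγ hγ0).congr_deriv ?_
  field_simp
  rw [Pi.neg_apply]
  linear_combination h1

theorem preserving_group_elements_general
    (I : Set ℝ) (hI : IsOpen I)
    (V Vbar : ℝ → ℝ) (ε εbar : ℝ)
    (α β γ δ α' β' γ' δ' γ'' : ℝ → ℝ)
    (hα : ∀ x ∈ I, HasDerivAt α (α' x) x)
    (hβ : ∀ x ∈ I, HasDerivAt β (β' x) x)
    (hγ : ∀ x ∈ I, HasDerivAt γ (γ' x) x)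
    (hγ' : ∀ x ∈ I, HasDerivAt γ' (γ'' x) x)
    (hδ : ∀ x ∈ I, HasDerivAt δ (δ' x) x)
    (hdet : ∀ x ∈ I, α x * δ x - β x * γ x = 1)
    (hγ0 : ∀ x ∈ I, γ x ≠ 0)
    (h1 : ∀ x ∈ I,
      -1 = -(δ x) ^ 2 + (γ x) ^ 2 * (V x - ε) + γ x * δ' x - δ x * γ' x)
    (h2 : ∀ x ∈ I,
      0 = 2 * β x * δ x - 2 * α x * γ x * (V x - ε)
        + δ x * α' x - α x * δ' x + β x * γ' x - γ x * β' x)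
    (h3 : ∀ x ∈ I,
      Vbar x - εbar = -(β x) ^ 2 + (α x) ^ 2 * (V x - ε)
        + α x * β' x - β x * α' x) :
    (∀ x ∈ I, α x = δ x + γ' x) ∧
    (∀ x ∈ I,
      HasDerivAt (fun y => -δ y / γ y)
        ((V x + 1 / (γ x) ^ 2 - ε) - (-δ x / γ x) ^ 2) x) ∧
    (∀ x ∈ I,
      Vbar x - εbar
        = V x
          - 2 * ((γ' x / γ x) * (-δ x / γ x)
                  + deriv (fun y => -δ y / γ y) x)
          + γ'' x / γ x - ε) := by
  have hdet' : ∀ x ∈ I, α' x * δ x + α x * δ' x - (β' x * γ x + β x * γ' x) = 0 :=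
    fun x hx => (((hα x hx).mul (hδ x hx)).sub ((hβ x hx).mul (hγ x hx))).unique_of_eqOn
      (hasDerivAt_const x 1) hI hdet hx
  have hdiag : ∀ x ∈ I, α x = δ x + γ' x := fun x hx =>
    diag_eq_of_preserving (hdet x hx) (hdet' x hx) (h1 x hx) (h2 x hx)
  have hriccati : ∀ x ∈ I, HasDerivAt (fun y => -δ y / γ y)
      ((V x + 1 / (γ x) ^ 2 - ε) - (-δ x / γ x) ^ 2) x := fun x hx =>
    hasDerivAt_neg_div_of_riccati (hδ x hx) (hγ x hx) (hγ0 x hx) (h1 x hx)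
  refine ⟨hdiag, hriccati, fun x hx => ?_⟩
  have hdiag' : α' x = δ' x + γ'' x :=
    (hα x hx).unique_of_eqOn ((hδ x hx).add (hγ' x hx)) hI hdiag hx
  rw [(hriccati x hx).deriv, h3 x hx]
  exact potential_eq_of_preserving (hγ0 x hx) (hdet x hx) (hdet' x hx) (h1 x hx) (h2 x hx)
    (hdiag x hx) hdiag'

/-- **Characterization of the group elements preserving the Schrödinger
subset of Riccati equations.** Suppose the SL(2,ℝ)-valued curve
`A = [[α, β], [γ, δ]]` (with `αδ - βγ = 1`, `γ ≠ 0`, `α ≠ 0` on the open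
interval `I`) transforms the Riccati equation `w' = -w² + V - ε` into one of
the same form `w̄' = -w̄² + V̄ - ε̄`, i.e. conditions (i)–(iii) hold.
Then on `I`: `α = δ + γ'`, the function `v = -δ/γ` solves the Riccati
equation `v' + v² = V + 1/γ² - ε`, and
`V̄ - ε̄ = V - 2((γ'/γ)v + v') + γ''/γ - ε`. -/
theorem preserving_group_elements
    (I : Set ℝ) (hI : IsOpen I)
    (V Vbar : ℝ → ℝ) (ε εbar : ℝ)
    (α β γ δ α' β' γ' δ' γ'' : ℝ → ℝ)
    (hα : ∀ x ∈ I, HasDerivAt α (α' x) x)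
    (hβ : ∀ x ∈ I, HasDerivAt β (β' x) x)
    (hγ : ∀ x ∈ I, HasDerivAt γ (γ' x) x)
    (hγ' : ∀ x ∈ I, HasDerivAt γ' (γ'' x) x)
    (hδ : ∀ x ∈ I, HasDerivAt δ (δ' x) x)
    (hdet : ∀ x ∈ I, α x * δ x - β x * γ x = 1)
    (hγ0 : ∀ x ∈ I, γ x ≠ 0) (hα0 : ∀ x ∈ I, α x ≠ 0)
    (h1 : ∀ x ∈ I,
      -1 = -(δ x) ^ 2 + (γ x) ^ 2 * (V x - ε) + γ x * δ' x - δ x * γ' x)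
    (h2 : ∀ x ∈ I,
      0 = 2 * β x * δ x - 2 * α x * γ x * (V x - ε)
        + δ x * α' x - α x * δ' x + β x * γ' x - γ x * β' x)
    (h3 : ∀ x ∈ I,
      Vbar x - εbar = -(β x) ^ 2 + (α x) ^ 2 * (V x - ε)
        + α x * β' x - β x * α' x) :
    (∀ x ∈ I, α x = δ x + γ' x) ∧
    (∀ x ∈ I,
      HasDerivAt (fun y => -δ y / γ y)
        ((V x + 1 / (γ x) ^ 2 - ε) - (-δ x / γ x) ^ 2) x) ∧
    (∀ x ∈ I,
      Vbar x - εbar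
        = V x
          - 2 * ((γ' x / γ x) * (-δ x / γ x)
                  + deriv (fun y => -δ y / γ y) x)
          + γ'' x / γ x - ε) :=
  preserving_group_elements_general I hI V Vbar ε εbar α β γ δ α' β' γ' δ' γ'' hα hβ hγ hγ' hδ hdet
    hγ0 h1 h2 h3
end

section
/- Let I ⊆ ℝ be an open interval, V : ℝ → ℝ, and E₀, E_n ∈ ℝ. Let ψ₀, ψ_n : ℝ → ℝ be twice differentiable on I, with ψ₀(x) ≠ 0 and ψ_n(x) ≠ 0 on I, satisfying -ψ₀'' + (V - E₀)·ψ₀ = 0 and -ψ_n'' + (V - E_n)·ψ_n = 0 on I. Set w₁(E₀) = ψ₀'/ψ₀ and w₁(E_n) = ψ_n'/ψ_n, and assume w₁(E₀)(x) ≠ w₁(E_n)(x) and -ψ_n'(x) + w₁(E₀)(x)·ψ_n(x) ≠ 0 on I. Then for all x ∈ I, the logarithmic derivative of ψ^{(1)}_n := -ψ_n' + (ψ₀'/ψ₀)·ψ_n satisfies (ψ^{(1)}_n)'(x)/ψ^{(1)}_n(x) = -w₁(E₀)(x) - (E₀ - E_n)/(w₁(E₀)(x) - w₁(E_n)(x)).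 -/
/-!
Writing `w = ψ'/ψ`, the Schrödinger equation `ψ'' = (V - E)ψ` becomes the Riccati
equation `w' = V - E - w²`. Since `A₁†(E₀)ψ_n = ψ_n (w₀ - w_n)`, differentiating and
eliminating `ψ_n''` and `w₀'` through these equations gives
`(A₁†(E₀)ψ_n)' = ψ_n (E_n - E₀ - w₀ (w₀ - w_n))`; dividing by `ψ_n (w₀ - w_n)` yields the
finite difference formula.
-/

section Riccati

variable {𝕜 : Type*} [NontriviallyNormedField 𝕜] {V ψ ψ' ψ'' : 𝕜 → 𝕜} {E x : 𝕜}

theorem hasDerivAt_div_of_hasDerivAt_deriv (hψ : HasDerivAt ψ (ψ' x) x)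
    (hψ' : HasDerivAt ψ' (ψ'' x) x) (hψ0 : ψ x ≠ 0) :
    HasDerivAt (fun y => ψ' y / ψ y) (ψ'' x / ψ x - (ψ' x / ψ x) ^ 2) x := by
  refine (hψ'.div hψ hψ0).congr_deriv ?_
  field_simp

theorem hasDerivAt_div_of_schrodinger (hψ : HasDerivAt ψ (ψ' x) x)
    (hψ' : HasDerivAt ψ' (ψ'' x) x) (hψ0 : ψ x ≠ 0)
    (hS : -ψ'' x + (V x - E) * ψ x = 0) :
    HasDerivAt (fun y => ψ' y / ψ y) (V x - E - (ψ' x / ψ x) ^ 2) x := by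
  refine (hasDerivAt_div_of_hasDerivAt_deriv hψ hψ' hψ0).congr_deriv ?_
  rw [neg_add_eq_zero.mp hS, mul_div_cancel_right₀ _ hψ0]

end Riccati

section Intertwining

variable {𝕜 : Type*} [NontriviallyNormedField 𝕜]
  {V ψ₀ ψ₀' ψ₀'' ψn ψn' ψn'' : 𝕜 → 𝕜} {E₀ En x : 𝕜}

theorem intertwined_eq_mul_sub (hψn0 : ψn x ≠ 0) :
    -ψn' x + ψ₀' x / ψ₀ x * ψn x = ψn x * (ψ₀' x / ψ₀ x - ψn' x / ψn x) := by
  field_simp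
  ring

theorem hasDerivAt_intertwined (hψ₀ : HasDerivAt ψ₀ (ψ₀' x) x)
    (hψ₀' : HasDerivAt ψ₀' (ψ₀'' x) x) (hψn : HasDerivAt ψn (ψn' x) x)
    (hψn' : HasDerivAt ψn' (ψn'' x) x) (hψ₀0 : ψ₀ x ≠ 0) (hψn0 : ψn x ≠ 0)
    (hS₀ : -ψ₀'' x + (V x - E₀) * ψ₀ x = 0) (hSn : -ψn'' x + (V x - En) * ψn x = 0) :
    HasDerivAt (fun y => -ψn' y + ψ₀' y / ψ₀ y * ψn y)
      (ψn x * (En - E₀ - ψ₀' x / ψ₀ x * (ψ₀' x / ψ₀ x - ψn' x / ψn x))) x := by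
  have hw₀ := hasDerivAt_div_of_schrodinger hψ₀ hψ₀' hψ₀0 hS₀
  refine (hψn'.neg.add (hw₀.mul hψn)).congr_deriv ?_
  rw [neg_add_eq_zero.mp hSn]
  field_simp
  ring

end Intertwining

theorem log_deriv_intertwined_eigenfunction_general
    (I : Set ℝ)
    (V : ℝ → ℝ) (E₀ En : ℝ)
    (ψ₀ ψ₀' ψ₀'' ψn ψn' ψn'' : ℝ → ℝ)
    (hψ₀ : ∀ x ∈ I, HasDerivAt ψ₀ (ψ₀' x) x)
    (hψ₀' : ∀ x ∈ I, HasDerivAt ψ₀' (ψ₀'' x) x)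
    (hψn : ∀ x ∈ I, HasDerivAt ψn (ψn' x) x)
    (hψn' : ∀ x ∈ I, HasDerivAt ψn' (ψn'' x) x)
    (hψ₀0 : ∀ x ∈ I, ψ₀ x ≠ 0) (hψn0 : ∀ x ∈ I, ψn x ≠ 0)
    (hS₀ : ∀ x ∈ I, -ψ₀'' x + (V x - E₀) * ψ₀ x = 0)
    (hSn : ∀ x ∈ I, -ψn'' x + (V x - En) * ψn x = 0)
    (hne : ∀ x ∈ I, ψ₀' x / ψ₀ x ≠ ψn' x / ψn x) :
    ∀ x ∈ I,
      deriv (fun y => -ψn' y + (ψ₀' y / ψ₀ y) * ψn y) x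
          / (-ψn' x + (ψ₀' x / ψ₀ x) * ψn x)
        = -(ψ₀' x / ψ₀ x)
          - (E₀ - En) / (ψ₀' x / ψ₀ x - ψn' x / ψn x) := by
  intro x hx
  have hsub : ψ₀' x / ψ₀ x - ψn' x / ψn x ≠ 0 := sub_ne_zero.mpr (hne x hx)
  rw [(hasDerivAt_intertwined (hψ₀ x hx) (hψ₀' x hx) (hψn x hx) (hψn' x hx) (hψ₀0 x hx)
    (hψn0 x hx) (hS₀ x hx) (hSn x hx)).deriv, intertwined_eq_mul_sub (hψn0 x hx),
    mul_div_mul_left _ _ (hψn0 x hx)]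
  field_simp
  ring

/-- **The logarithmic derivative of `A₁†(E₀)ψ_n` is given by the finite
difference formula.** Let `ψ₀`, `ψ_n` be nonvanishing twice differentiable
solutions of `-ψ'' + (V - E₀)ψ = 0` and `-ψ'' + (V - E_n)ψ = 0` on the open
interval `I`, with `w₁(E₀) = ψ₀'/ψ₀ ≠ ψ_n'/ψ_n = w₁(E_n)` and
`ψ_n^{(1)} = -ψ_n' + (ψ₀'/ψ₀)ψ_n` nonvanishing on `I`. Then on `I`
`(ψ_n^{(1)})'/ψ_n^{(1)} = -w₁(E₀) - (E₀ - E_n)/(w₁(E₀) - w₁(E_n))`. -/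
theorem log_deriv_intertwined_eigenfunction
    (I : Set ℝ) (hI : IsOpen I)
    (V : ℝ → ℝ) (E₀ En : ℝ)
    (ψ₀ ψ₀' ψ₀'' ψn ψn' ψn'' : ℝ → ℝ)
    (hψ₀ : ∀ x ∈ I, HasDerivAt ψ₀ (ψ₀' x) x)
    (hψ₀' : ∀ x ∈ I, HasDerivAt ψ₀' (ψ₀'' x) x)
    (hψn : ∀ x ∈ I, HasDerivAt ψn (ψn' x) x)
    (hψn' : ∀ x ∈ I, HasDerivAt ψn' (ψn'' x) x)
    (hψ₀0 : ∀ x ∈ I, ψ₀ x ≠ 0) (hψn0 : ∀ x ∈ I, ψn x ≠ 0)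
    (hS₀ : ∀ x ∈ I, -ψ₀'' x + (V x - E₀) * ψ₀ x = 0)
    (hSn : ∀ x ∈ I, -ψn'' x + (V x - En) * ψn x = 0)
    (hne : ∀ x ∈ I, ψ₀' x / ψ₀ x ≠ ψn' x / ψn x)
    (hA : ∀ x ∈ I, -ψn' x + (ψ₀' x / ψ₀ x) * ψn x ≠ 0) :
    ∀ x ∈ I,
      deriv (fun y => -ψn' y + (ψ₀' y / ψ₀ y) * ψn y) x
          / (-ψn' x + (ψ₀' x / ψ₀ x) * ψn x)
        = -(ψ₀' x / ψ₀ x)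
          - (E₀ - En) / (ψ₀' x / ψ₀ x - ψn' x / ψn x) :=
  log_deriv_intertwined_eigenfunction_general I V E₀ En ψ₀ ψ₀' ψ₀'' ψn ψn' ψn'' hψ₀ hψ₀' hψn hψn'
    hψ₀0 hψn0 hS₀ hSn hne
end

section
/- Let I ⊆ ℝ be an open interval, V : ℝ → ℝ differentiable on I, and E₀, E ∈ ℝ. Let ψ₀ : ℝ → ℝ be twice differentiable on I with ψ₀(x) ≠ 0 on I and -ψ₀'' + V·ψ₀ = E₀·ψ₀ on I, and let ψ : ℝ → ℝ be twice differentiable on I with -ψ'' + V·ψ = E·ψ on I. Then the function φ = -ψ' + (ψ₀'/ψ₀)·ψ is twice differentiable on I and satisfies -φ'' + (V - 2·(ψ₀'/ψ₀)')·φ = E·φ on I. -/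
/-!
The logarithmic derivative `w = ψ₀'/ψ₀` of a nonvanishing eigenfunction satisfies the
Riccati equation `w' = V - E₀ - w²`. Eliminating `w'` and `ψ''` with the Riccati and the
Schrödinger equation, `φ = -ψ' + wψ` has `φ' = (E - E₀ - w²)ψ + wψ'`, which is again
differentiable, and the Schrödinger equation for `φ` with potential `V - 2w'` becomes a
polynomial identity in `w, ψ, ψ', V, E, E₀`.
-/

section Darboux

variable {V w ψ₀ ψ₀' ψ₀'' ψ ψ' ψ'' : ℝ → ℝ} {E₀ E x : ℝ}

theorem hasDerivAt_div_of_schrodinger_s17 (h₀ : HasDerivAt ψ₀ (ψ₀' x) x)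
    (h₁ : HasDerivAt ψ₀' (ψ₀'' x) x) (hne : ψ₀ x ≠ 0)
    (hS : -ψ₀'' x + V x * ψ₀ x = E₀ * ψ₀ x) :
    HasDerivAt (fun y => ψ₀' y / ψ₀ y) (V x - E₀ - (ψ₀' x / ψ₀ x) ^ 2) x := by
  refine (h₁.div h₀ hne).congr_deriv ?_
  rw [show ψ₀'' x = (V x - E₀) * ψ₀ x by linarith]
  field_simp

theorem hasDerivAt_darboux (hw : HasDerivAt w (V x - E₀ - w x ^ 2) x)
    (hψ : HasDerivAt ψ (ψ' x) x) (hψ' : HasDerivAt ψ' (ψ'' x) x)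
    (hS : -ψ'' x + V x * ψ x = E * ψ x) :
    HasDerivAt (fun y => -ψ' y + w y * ψ y) ((E - E₀ - w x ^ 2) * ψ x + w x * ψ' x) x :=
  (hψ'.neg.add (hw.mul hψ)).congr_deriv (by linear_combination hS)

theorem hasDerivAt_deriv_darboux {U : Set ℝ} (hU : IsOpen U) (hx : x ∈ U)
    (hw : ∀ y ∈ U, HasDerivAt w (V y - E₀ - w y ^ 2) y)
    (hψ : ∀ y ∈ U, HasDerivAt ψ (ψ' y) y) (hψ' : ∀ y ∈ U, HasDerivAt ψ' (ψ'' y) y)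
    (hS : ∀ y ∈ U, -ψ'' y + V y * ψ y = E * ψ y) :
    HasDerivAt (deriv fun y => -ψ' y + w y * ψ y)
      (-2 * w x * (V x - E₀ - w x ^ 2) * ψ x + (E - E₀ - w x ^ 2) * ψ' x
        + ((V x - E₀ - w x ^ 2) * ψ' x + w x * ψ'' x)) x := by
  have hφ' : (deriv fun y => -ψ' y + w y * ψ y) =ᶠ[nhds x]
      fun y => (E - E₀ - w y ^ 2) * ψ y + w y * ψ' y := by
    filter_upwards [hU.mem_nhds hx] with y hy
    exact (hasDerivAt_darboux (hw y hy) (hψ y hy) (hψ' y hy) (hS y hy)).deriv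
  refine (((((hw x hx).fun_pow 2).const_sub (E - E₀)).mul (hψ x hx)).add
    ((hw x hx).mul (hψ' x hx))).congr_of_eventuallyEq hφ' |>.congr_deriv ?_
  ring

end Darboux

theorem darboux_transformation_general
    (I : Set ℝ) (hI : IsOpen I)
    (V : ℝ → ℝ)
    (E₀ E : ℝ)
    (ψ₀ ψ₀' ψ₀'' ψ ψ' ψ'' : ℝ → ℝ)
    (hψ₀ : ∀ x ∈ I, HasDerivAt ψ₀ (ψ₀' x) x)
    (hψ₀' : ∀ x ∈ I, HasDerivAt ψ₀' (ψ₀'' x) x)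
    (hψ : ∀ x ∈ I, HasDerivAt ψ (ψ' x) x)
    (hψ' : ∀ x ∈ I, HasDerivAt ψ' (ψ'' x) x)
    (hψ₀0 : ∀ x ∈ I, ψ₀ x ≠ 0)
    (hS₀ : ∀ x ∈ I, -ψ₀'' x + V x * ψ₀ x = E₀ * ψ₀ x)
    (hS : ∀ x ∈ I, -ψ'' x + V x * ψ x = E * ψ x) :
    (∀ x ∈ I,
      DifferentiableAt ℝ (fun y => -ψ' y + (ψ₀' y / ψ₀ y) * ψ y) x) ∧
    (∀ x ∈ I,
      DifferentiableAt ℝ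
        (deriv (fun y => -ψ' y + (ψ₀' y / ψ₀ y) * ψ y)) x) ∧
    (∀ x ∈ I,
      -(deriv (deriv (fun y => -ψ' y + (ψ₀' y / ψ₀ y) * ψ y)) x)
          + (V x - 2 * deriv (fun y => ψ₀' y / ψ₀ y) x)
            * (-ψ' x + (ψ₀' x / ψ₀ x) * ψ x)
        = E * (-ψ' x + (ψ₀' x / ψ₀ x) * ψ x)) := by
  have hw : ∀ x ∈ I,
      HasDerivAt (fun y => ψ₀' y / ψ₀ y) (V x - E₀ - (ψ₀' x / ψ₀ x) ^ 2) x :=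
    fun x hx =>
      hasDerivAt_div_of_schrodinger_s17 (hψ₀ x hx) (hψ₀' x hx) (hψ₀0 x hx) (hS₀ x hx)
  have hφ' x (hx : x ∈ I) := hasDerivAt_darboux (hw x hx) (hψ x hx) (hψ' x hx) (hS x hx)
  have hφ'' x (hx : x ∈ I) := hasDerivAt_deriv_darboux hI hx hw hψ hψ' hS
  refine ⟨fun x hx => (hφ' x hx).differentiableAt,
    fun x hx => (hφ'' x hx).differentiableAt, fun x hx => ?_⟩
  rw [(hφ'' x hx).deriv, (hw x hx).deriv]
  linear_combination (ψ₀' x / ψ₀ x) * hS x hx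

/-- **First-order intertwining (Darboux) transformation of eigenfunctions.**
Let `ψ₀` be a nonvanishing twice differentiable solution of
`-ψ₀'' + Vψ₀ = E₀ψ₀` on the open interval `I`, where `V` is differentiable
on `I`, and let `ψ` be a twice differentiable solution of `-ψ'' + Vψ = Eψ`
on `I`. Then `φ = -ψ' + (ψ₀'/ψ₀)ψ` is twice differentiable on `I` and
satisfies `-φ'' + (V - 2(ψ₀'/ψ₀)')φ = Eφ` on `I`. -/
theorem darboux_transformation
    (I : Set ℝ) (hI : IsOpen I)
    (V : ℝ → ℝ) (hV : ∀ x ∈ I, DifferentiableAt ℝ V x)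
    (E₀ E : ℝ)
    (ψ₀ ψ₀' ψ₀'' ψ ψ' ψ'' : ℝ → ℝ)
    (hψ₀ : ∀ x ∈ I, HasDerivAt ψ₀ (ψ₀' x) x)
    (hψ₀' : ∀ x ∈ I, HasDerivAt ψ₀' (ψ₀'' x) x)
    (hψ : ∀ x ∈ I, HasDerivAt ψ (ψ' x) x)
    (hψ' : ∀ x ∈ I, HasDerivAt ψ' (ψ'' x) x)
    (hψ₀0 : ∀ x ∈ I, ψ₀ x ≠ 0)
    (hS₀ : ∀ x ∈ I, -ψ₀'' x + V x * ψ₀ x = E₀ * ψ₀ x)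
    (hS : ∀ x ∈ I, -ψ'' x + V x * ψ x = E * ψ x) :
    (∀ x ∈ I,
      DifferentiableAt ℝ (fun y => -ψ' y + (ψ₀' y / ψ₀ y) * ψ y) x) ∧
    (∀ x ∈ I,
      DifferentiableAt ℝ
        (deriv (fun y => -ψ' y + (ψ₀' y / ψ₀ y) * ψ y)) x) ∧
    (∀ x ∈ I,
      -(deriv (deriv (fun y => -ψ' y + (ψ₀' y / ψ₀ y) * ψ y)) x)
          + (V x - 2 * deriv (fun y => ψ₀' y / ψ₀ y) x)
            * (-ψ' x + (ψ₀' x / ψ₀ x) * ψ x)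
        = E * (-ψ' x + (ψ₀' x / ψ₀ x) * ψ x)) :=
  darboux_transformation_general I hI V E₀ E ψ₀ ψ₀' ψ₀'' ψ ψ' ψ'' hψ₀ hψ₀' hψ hψ' hψ₀0 hS₀ hS
end

section
/- Let b > 0 and l ∈ ℝ with -3/2 < l < -1. Define on (0, ∞) the potential V^{im}_{l,b}(x) = b²x²/4 + (l+1)(l+2)/x² - b(l + 3/2) + 6b(l+1)/(b x² - 2(l+1))², and the function η(x) = x^{l+2}·exp(-b x²/4)/√(b x² - 2(l+1)). Then b x² - 2(l+1) > 0 for all x > 0, η is twice differentiable on (0, ∞), and -η''(x) + V^{im}_{l,b}(x)·η(x) = 0 for all x > 0. -/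
/-!
The logarithmic derivative of `η` is `W x = (l+2)/x - b x/2 - b x/(b x² - 2(l+1))`, so that
`η'' = (W' + W²) η`, and `W' + W²` is exactly `V^{im}_{l,b}` (a rational identity).
-/

open Filter Topology

theorem hasDerivAt_deriv_of_eventually_hasDerivAt_mul {f W : ℝ → ℝ} {x w : ℝ}
    (hf : ∀ᶠ y in 𝓝 x, HasDerivAt f (W y * f y) y) (hW : HasDerivAt W w x) :
    HasDerivAt (deriv f) ((w + W x ^ 2) * f x) x := by
  have hderiv : deriv f =ᶠ[𝓝 x] fun y => W y * f y :=
    hf.mono fun y hy => hy.deriv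
  have hprod := hW.mul hf.self_of_nhds
  refine (hprod.congr_of_eventuallyEq hderiv).congr_deriv ?_
  ring

noncomputable section

namespace RadialOscillator

def imageGroundState (b l : ℝ) : ℝ → ℝ :=
  fun y : ℝ => y ^ (l + 2) * Real.exp (-b * y ^ 2 / 4)
    / Real.sqrt (b * y ^ 2 - 2 * (l + 1))

def imageLogDeriv (b l : ℝ) (y : ℝ) : ℝ :=
  (l + 2) / y - b * y / 2 - b * y / (b * y ^ 2 - 2 * (l + 1))

def imagePotential (b l : ℝ) (x : ℝ) : ℝ :=
  b ^ 2 * x ^ 2 / 4 + (l + 1) * (l + 2) / x ^ 2 - b * (l + 3 / 2)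
    + 6 * b * (l + 1) / (b * x ^ 2 - 2 * (l + 1)) ^ 2

theorem hasDerivAt_mul_sq_sub_const (b l x : ℝ) :
    HasDerivAt (fun y : ℝ => b * y ^ 2 - 2 * (l + 1)) (2 * b * x) x :=
  (((hasDerivAt_pow 2 x).const_mul b).sub_const (2 * (l + 1))).congr_deriv (by norm_num; ring)

variable {b l x : ℝ}

theorem hasDerivAt_imageGroundState (hx : 0 < x) (hS : 0 < b * x ^ 2 - 2 * (l + 1)) :
    HasDerivAt (imageGroundState b l) (imageLogDeriv b l x * imageGroundState b l x) x := by
  have hpow : HasDerivAt (fun y : ℝ => y ^ (l + 2)) ((l + 2) * x ^ (l + 2 - 1)) x :=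
    Real.hasDerivAt_rpow_const (Or.inl hx.ne')
  have hgauss : HasDerivAt (fun y : ℝ => -b * y ^ 2 / 4) (-b * x / 2) x :=
    (((hasDerivAt_pow 2 x).const_mul (-b)).div_const 4).congr_deriv (by norm_num; ring)
  have hsqrt := (hasDerivAt_mul_sq_sub_const b l x).sqrt hS.ne'
  refine ((hpow.mul hgauss.exp).div hsqrt (Real.sqrt_pos.mpr hS).ne').congr_deriv ?_
  rw [Real.rpow_sub hx, Real.rpow_one]
  simp only [imageGroundState, imageLogDeriv, Pi.mul_apply]
  set r := Real.sqrt (b * x ^ 2 - 2 * (l + 1))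
  have hr : r ≠ 0 := (Real.sqrt_pos.mpr hS).ne'
  have hsq : r ^ 2 = b * x ^ 2 - 2 * (l + 1) := Real.sq_sqrt hS.le
  rw [← hsq]
  field_simp
  ring

theorem hasDerivAt_imageLogDeriv (hx : x ≠ 0) (hS : b * x ^ 2 - 2 * (l + 1) ≠ 0) :
    HasDerivAt (imageLogDeriv b l)
      (-(l + 2) / x ^ 2 - b / 2 + b * (b * x ^ 2 + 2 * (l + 1)) / (b * x ^ 2 - 2 * (l + 1)) ^ 2)
      x := by
  have hinv := (hasDerivAt_const x (l + 2)).div (hasDerivAt_id x) hx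
  have hlin := ((hasDerivAt_id x).const_mul b).div_const 2
  have hquot := ((hasDerivAt_id x).const_mul b).div (hasDerivAt_mul_sq_sub_const b l x) hS
  refine ((hinv.sub hlin).sub hquot).congr_deriv ?_
  simp only [id]
  field_simp
  ring

theorem imageLogDeriv_riccati (hx : x ≠ 0) (hS : b * x ^ 2 - 2 * (l + 1) ≠ 0) :
    -(l + 2) / x ^ 2 - b / 2 + b * (b * x ^ 2 + 2 * (l + 1)) / (b * x ^ 2 - 2 * (l + 1)) ^ 2
      + imageLogDeriv b l x ^ 2 = imagePotential b l x := by
  simp only [imageLogDeriv, imagePotential]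
  -- `field_simp` does not clear the compound denominator `b x² - 2(l+1)`, so make it an atom `S`
  -- and eliminate `b` instead.
  generalize hSdef : b * x ^ 2 - 2 * (l + 1) = S at hS ⊢
  have hbx : b = (S + 2 * (l + 1)) / x ^ 2 := by field_simp; linarith
  subst hbx
  field_simp
  ring

theorem mul_sq_sub_pos (hb : 0 < b) (hl : l < -1) (hx : x ≠ 0) :
    0 < b * x ^ 2 - 2 * (l + 1) := by
  have hbx : 0 < b * x ^ 2 := by positivity
  linarith

theorem hasDerivAt_deriv_imageGroundState (hb : 0 < b) (hl : l < -1) (hx : 0 < x) :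
    HasDerivAt (deriv (imageGroundState b l))
      (imagePotential b l x * imageGroundState b l x) x := by
  have hη : ∀ᶠ y in 𝓝 x, HasDerivAt (imageGroundState b l)
      (imageLogDeriv b l y * imageGroundState b l y) y := by
    filter_upwards [Ioi_mem_nhds hx] with y hy
    exact hasDerivAt_imageGroundState hy (mul_sq_sub_pos hb hl hy.ne')
  have hS := (mul_sq_sub_pos hb hl hx.ne').ne'
  rw [← imageLogDeriv_riccati hx.ne' hS]
  exact hasDerivAt_deriv_of_eventually_hasDerivAt_mul hη (hasDerivAt_imageLogDeriv hx.ne' hS)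

end RadialOscillator

end

open RadialOscillator in
theorem radial_oscillator_image_potential_eigenstate_general
    (b l : ℝ) (hb : 0 < b) (hl₂ : l < -1) :
    (∀ x : ℝ, 0 < x → 0 < b * x ^ 2 - 2 * (l + 1)) ∧
    (∀ x : ℝ, 0 < x →
      DifferentiableAt ℝ
        (fun y : ℝ => y ^ (l + 2) * Real.exp (-b * y ^ 2 / 4)
          / Real.sqrt (b * y ^ 2 - 2 * (l + 1))) x) ∧
    (∀ x : ℝ, 0 < x →
      DifferentiableAt ℝ
        (deriv (fun y : ℝ => y ^ (l + 2) * Real.exp (-b * y ^ 2 / 4)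
          / Real.sqrt (b * y ^ 2 - 2 * (l + 1)))) x) ∧
    (∀ x : ℝ, 0 < x →
      -(deriv (deriv (fun y : ℝ => y ^ (l + 2) * Real.exp (-b * y ^ 2 / 4)
            / Real.sqrt (b * y ^ 2 - 2 * (l + 1)))) x)
          + (b ^ 2 * x ^ 2 / 4 + (l + 1) * (l + 2) / x ^ 2
              - b * (l + 3 / 2)
              + 6 * b * (l + 1) / (b * x ^ 2 - 2 * (l + 1)) ^ 2)
            * (x ^ (l + 2) * Real.exp (-b * x ^ 2 / 4)
                / Real.sqrt (b * x ^ 2 - 2 * (l + 1)))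
        = 0) := by
  refine ⟨fun x hx => mul_sq_sub_pos hb hl₂ hx.ne',
    fun x hx => (hasDerivAt_imageGroundState hx (mul_sq_sub_pos hb hl₂ hx.ne')).differentiableAt,
    fun x hx => (hasDerivAt_deriv_imageGroundState hb hl₂ hx).differentiableAt,
    fun x hx => ?_⟩
  change -deriv (deriv (imageGroundState b l)) x
    + imagePotential b l x * imageGroundState b l x = 0
  rw [(hasDerivAt_deriv_imageGroundState hb hl₂ hx).deriv]
  ring

/-- **Example: new potential from the generalized finite-difference
transformation of the radial oscillator.** For `b > 0` and `-3/2 < l < -1`,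
set on `(0, ∞)`
`V^{im}_{l,b}(x) = b²x²/4 + (l+1)(l+2)/x² - b(l + 3/2) + 6b(l+1)/(bx² - 2(l+1))²`
and `η(x) = x^{l+2} e^{-bx²/4} / √(bx² - 2(l+1))`. Then `bx² - 2(l+1) > 0`
for all `x > 0`, `η` is twice differentiable on `(0, ∞)`, and
`-η'' + V^{im}_{l,b} η = 0` on `(0, ∞)`. -/
theorem radial_oscillator_image_potential_eigenstate
    (b l : ℝ) (hb : 0 < b) (hl₁ : -(3 / 2 : ℝ) < l) (hl₂ : l < -1) :
    (∀ x : ℝ, 0 < x → 0 < b * x ^ 2 - 2 * (l + 1)) ∧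
    (∀ x : ℝ, 0 < x →
      DifferentiableAt ℝ
        (fun y : ℝ => y ^ (l + 2) * Real.exp (-b * y ^ 2 / 4)
          / Real.sqrt (b * y ^ 2 - 2 * (l + 1))) x) ∧
    (∀ x : ℝ, 0 < x →
      DifferentiableAt ℝ
        (deriv (fun y : ℝ => y ^ (l + 2) * Real.exp (-b * y ^ 2 / 4)
          / Real.sqrt (b * y ^ 2 - 2 * (l + 1)))) x) ∧
    (∀ x : ℝ, 0 < x →
      -(deriv (deriv (fun y : ℝ => y ^ (l + 2) * Real.exp (-b * y ^ 2 / 4)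
            / Real.sqrt (b * y ^ 2 - 2 * (l + 1)))) x)
          + (b ^ 2 * x ^ 2 / 4 + (l + 1) * (l + 2) / x ^ 2
              - b * (l + 3 / 2)
              + 6 * b * (l + 1) / (b * x ^ 2 - 2 * (l + 1)) ^ 2)
            * (x ^ (l + 2) * Real.exp (-b * x ^ 2 / 4)
                / Real.sqrt (b * x ^ 2 - 2 * (l + 1)))
        = 0) :=
  radial_oscillator_image_potential_eigenstate_general b l hb hl₂
end
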